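/- arXiv:1810.08673 — 10 statements merged into one kernel-verified Lean document; each statement's English description precedes it below -/
import Mathlib

section
/- Let n ≥ 1, let a : Fin n → ℕ satisfy a i ≥ 2 for every i, let f(z) = ∑ i, (z i)^(a i), let d be the least common multiple of the a i and dᵢ = d / (a i). Set V = f⁻¹(0). For every z ∈ V with z ≠ 0, the vector w = (fun i => (dᵢ : ℂ) * z i) satisfies fderiv ℂ f z w = 0 and re ⟪z, w⟫ > 0 (Hermitian inner product on EuclideanSpace ℂ (Fin n)). Consequently, at every point of V ∖ {0} there is a vector tangent to V which is not tangent to the sphere through that point centered at the origin, so V ∖ {0} meets every sphere centered at the origin transversally. -/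
/-!
Along the weighted action `t • z = (t ^ dᵢ * z i)ᵢ` the polynomial `f` is homogeneous:
`f (t • z) = t ^ d * f z`, since `aᵢ * dᵢ = d`. Differentiating at `t = 1` gives the Euler identity
`Df(z) w = d * f z`, which vanishes on `V`. On the other hand `re ⟪z, w⟫ = ∑ dᵢ * ‖zᵢ‖²` is positive
for `z ≠ 0` because every weight `dᵢ` is positive.
-/

section

variable {𝕜 ι : Type*} [RCLike 𝕜] [Fintype ι]

theorem hasFDerivAt_sum_pow (a : ι → ℕ) (z : EuclideanSpace 𝕜 ι) :
    HasFDerivAt (fun z : EuclideanSpace 𝕜 ι => ∑ i, z i ^ a i)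
      (∑ i, ((a i : 𝕜) * z i ^ (a i - 1)) • (EuclideanSpace.proj i : EuclideanSpace 𝕜 ι →L[𝕜] 𝕜))
      z :=
  HasFDerivAt.fun_sum fun i _ =>
    (hasDerivAt_pow (a i) (z i)).comp_hasFDerivAt z (EuclideanSpace.proj (𝕜 := 𝕜) i).hasFDerivAt

theorem fderiv_sum_pow_apply_weighted {a w : ι → ℕ} {d : ℕ} (haw : ∀ i, a i * w i = d)
    (z : EuclideanSpace 𝕜 ι) :
    fderiv 𝕜 (fun z : EuclideanSpace 𝕜 ι => ∑ i, z i ^ a i) z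
        (WithLp.toLp 2 fun i => (w i : 𝕜) * z i) = d * ∑ i, z i ^ a i := by
  rw [(hasFDerivAt_sum_pow a z).fderiv, sum_apply, Finset.mul_sum]
  refine Finset.sum_congr rfl fun i _ => ?_
  rw [smul_apply, PiLp.proj_apply, smul_eq_mul, ← haw i]
  rcases Nat.eq_zero_or_pos (a i) with h0 | hpos
  · simp [h0]
  · rw [← pow_sub_one_mul hpos.ne' (z i)]
    push_cast
    ring

theorem re_inner_weighted (c : ι → ℝ) (z : EuclideanSpace 𝕜 ι) :
    RCLike.re (inner 𝕜 z (WithLp.toLp 2 fun i => (c i : 𝕜) * z i)) = ∑ i, c i * ‖z i‖ ^ 2 := by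
  rw [PiLp.inner_apply, map_sum]
  refine Finset.sum_congr rfl fun i _ => ?_
  dsimp only [PiLp.toLp_apply]
  rw [← RCLike.real_smul_eq_coe_mul, inner_smul_right_eq_smul, RCLike.smul_re,
    inner_self_eq_norm_sq]

theorem re_inner_weighted_pos {c : ι → ℝ} (hc : ∀ i, 0 < c i) {z : EuclideanSpace 𝕜 ι}
    (hz : z ≠ 0) : 0 < RCLike.re (inner 𝕜 z (WithLp.toLp 2 fun i => (c i : 𝕜) * z i)) := by
  obtain ⟨i, hi⟩ : ∃ i, z i ≠ 0 := by
    contrapose! hz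
    exact PiLp.ext hz
  rw [re_inner_weighted]
  exact Finset.sum_pos' (fun j _ => by have := hc j; positivity)
    ⟨i, Finset.mem_univ i, by have := hc i; positivity⟩

end

theorem Finset.lcm_div_pos {ι : Type*} {s : Finset ι} {a : ι → ℕ} (ha : ∀ i ∈ s, a i ≠ 0)
    {i : ι} (hi : i ∈ s) : 0 < s.lcm a / a i := by
  have hlcm : s.lcm a ≠ 0 := fun h => by
    obtain ⟨j, hj, hj0⟩ := Finset.lcm_eq_zero_iff.mp h
    exact ha j hj hj0
  exact Nat.div_pos (Nat.le_of_dvd (Nat.pos_of_ne_zero hlcm) (Finset.dvd_lcm hi))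
    (Nat.pos_of_ne_zero (ha i hi))

theorem phamBrieskorn_zero_locus_transverse_to_spheres_general
    (n : ℕ) (a : Fin n → ℕ) (ha : ∀ i, 2 ≤ a i)
    (d : ℕ) (hd : d = Finset.univ.lcm a)
    (z : EuclideanSpace ℂ (Fin n)) (hzV : (∑ i, z i ^ a i) = 0) (hz : z ≠ 0) :
    fderiv ℂ (fun z : EuclideanSpace ℂ (Fin n) => ∑ i, z i ^ a i) z
        ((WithLp.equiv 2 (Fin n → ℂ)).symm fun i => ((d / a i : ℕ) : ℂ) * z i) = 0 ∧
      0 < (inner ℂ z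
            ((WithLp.equiv 2 (Fin n → ℂ)).symm fun i => ((d / a i : ℕ) : ℂ) * z i) : ℂ).re := by
  subst hd
  have hweight : ∀ i, a i * (Finset.univ.lcm a / a i) = Finset.univ.lcm a := fun i =>
    Nat.mul_div_cancel' (Finset.dvd_lcm (Finset.mem_univ i))
  have hweight_pos : ∀ i, (0 : ℝ) < (Finset.univ.lcm a / a i : ℕ) := fun i =>
    Nat.cast_pos.mpr <| Finset.lcm_div_pos (fun j _ => by have := ha j; omega) (Finset.mem_univ i)
  constructor
  · rw [WithLp.equiv_symm_apply, fderiv_sum_pow_apply_weighted hweight, hzV, mul_zero]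
  · simpa using re_inner_weighted_pos (𝕜 := ℂ) hweight_pos hz

/-- Let `f z = ∑ i, (z i) ^ (a i)` be a Pham–Brieskorn
polynomial (`a i ≥ 2`), `d = lcm (a i)`, `dᵢ = d / a i`, and `V = f⁻¹(0)`.
For every `z ∈ V` with `z ≠ 0`, the vector `w = fun i => dᵢ * z i` (the
infinitesimal generator of the weighted `ℝ⁺`-action) is tangent to `V`
(`fderiv ℂ f z w = 0`) but not tangent to the sphere through `z`
(`re ⟪z, w⟫ > 0`); hence `V ∖ {0}` meets every sphere centered at the
origin transversally. -/
theorem phamBrieskorn_zero_locus_transverse_to_spheres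
    (n : ℕ) (hn : 1 ≤ n) (a : Fin n → ℕ) (ha : ∀ i, 2 ≤ a i)
    (d : ℕ) (hd : d = Finset.univ.lcm a)
    (z : EuclideanSpace ℂ (Fin n)) (hzV : (∑ i, z i ^ a i) = 0) (hz : z ≠ 0) :
    fderiv ℂ (fun z : EuclideanSpace ℂ (Fin n) => ∑ i, z i ^ a i) z
        ((WithLp.equiv 2 (Fin n → ℂ)).symm fun i => ((d / a i : ℕ) : ℂ) * z i) = 0 ∧
      0 < (inner ℂ z
            ((WithLp.equiv 2 (Fin n → ℂ)).symm fun i => ((d / a i : ℕ) : ℂ) * z i) : ℂ).re :=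
  phamBrieskorn_zero_locus_transverse_to_spheres_general n a ha d hd z hzV hz
end

section
/- Let n ≥ 1, let a : Fin n → ℕ satisfy a i ≥ 2 for every i, and let f(z) = ∑ i, (z i)^(a i) be the Pham–Brieskorn polynomial on EuclideanSpace ℂ (Fin n). Let S = {z : ‖z‖ = 1} be the unit sphere, L_f = {z ∈ S : f(z) = 0} the link, and define φ : S ∖ L_f → Metric.sphere (0:ℂ) 1 by φ(z) = f(z)/‖f(z)‖. Then φ is the projection of a topological fiber bundle: there exist a topological space F and, for every point b of the unit circle, a trivialization of φ with fiber F whose base set contains b (in Mathlib terms, ∃ e : Trivialization F φ with b ∈ e.baseSet). -/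
/-- The Pham–Brieskorn polynomial `z ↦ ∑ i, (z i) ^ (a i)`. -/
noncomputable def pbPoly (n : ℕ) (a : Fin n → ℕ) (z : EuclideanSpace ℂ (Fin n)) : ℂ :=
  ∑ i, z i ^ a i

/-- The unit sphere `S` in `EuclideanSpace ℂ (Fin n)`. -/
def pbSphere (n : ℕ) : Set (EuclideanSpace ℂ (Fin n)) := {z | ‖z‖ = 1}

/-- The link `L_f = {z ∈ S : f z = 0}` of the Pham–Brieskorn polynomial. -/
def pbLink (n : ℕ) (a : Fin n → ℕ) : Set (EuclideanSpace ℂ (Fin n)) :=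
  {z | ‖z‖ = 1 ∧ pbPoly n a z = 0}

/-- The Milnor map `φ : S ∖ L_f → S¹`, `φ z = f z / ‖f z‖`. -/
noncomputable def pbMilnorMap (n : ℕ) (a : Fin n → ℕ)
    (z : (pbSphere n \ pbLink n a : Set (EuclideanSpace ℂ (Fin n)))) :
    Metric.sphere (0 : ℂ) 1 :=
  ⟨pbPoly n a z.1 / (‖pbPoly n a z.1‖ : ℂ), by
    have hz : pbPoly n a z.1 ≠ 0 := fun h => z.2.2 ⟨z.2.1, h⟩
    have hn0 : ‖pbPoly n a z.1‖ ≠ 0 := norm_ne_zero_iff.mpr hz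
    simp [mem_sphere_zero_iff_norm, norm_div, hz]⟩

open Complex

/-!
The weighted rotation `t • z = (exp (i t / a₀) z₀, …)` preserves the unit sphere and satisfies
`f (t • z) = exp (i t) f z`, so it preserves `S ∖ L_f` and makes the Milnor map `φ` equivariant for
the rotation action of `ℝ` on the circle. Over the circle slit at `-b` the argument has a continuous
branch `θ`, and `z ↦ (φ z, (-θ (φ z)) • z)` identifies `φ⁻¹` of the slit circle with its product
with the fiber `φ⁻¹ {1}`; the inverse is `(u, y) ↦ θ u • y`.
-/

noncomputable def localArg (b u : ℂ) : ℝ := arg b + arg (u / b)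

lemma exp_localArg_mul_I {b u : ℂ} (hb : ‖b‖ = 1) (hu : ‖u‖ = 1) :
    exp (localArg b u * I) = u := by
  have hb0 : b ≠ 0 := norm_ne_zero_iff.mp (by simp [hb])
  have exp_arg_mul_I {w : ℂ} (hw : ‖w‖ = 1) : exp (arg w * I) = w := by
    simpa [hw] using norm_mul_exp_arg_mul_I w
  rw [localArg, ofReal_add, add_mul, exp_add, exp_arg_mul_I hb,
    exp_arg_mul_I (by rw [norm_div, hb, hu, div_one]), mul_div_cancel₀ _ hb0]

lemma continuousOn_localArg (b : ℂ) : ContinuousOn (localArg b) {u | u / b ∈ slitPlane} :=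
  fun _ hu => (continuousAt_const.add
    ((continuousAt_arg hu).comp (f := (· / b)) (continuousAt_id.div_const b))).continuousWithinAt

-- The unit circle minus `-b` (empty if `b = 0`).
def slitCircle (b : ℂ) : Set (Metric.sphere (0 : ℂ) 1) := {u | (u : ℂ) / b ∈ slitPlane}

lemma isOpen_slitCircle (b : ℂ) : IsOpen (slitCircle b) :=
  isOpen_slitPlane.preimage (continuous_subtype_val.div_const b)

lemma mem_slitCircle_self (b : Metric.sphere (0 : ℂ) 1) : b ∈ slitCircle b := by
  simp [slitCircle, div_self (ne_zero_of_mem_unit_sphere b)]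

lemma continuousOn_localArg_slitCircle (b : ℂ) :
    ContinuousOn (fun u : Metric.sphere (0 : ℂ) 1 => localArg b u) (slitCircle b) :=
  (continuousOn_localArg b).comp continuous_subtype_val.continuousOn fun _ hu => hu

section EquivariantCircleMap

variable {X : Type*} [TopologicalSpace X] (ϕ : Flow ℝ X) {p : X → Metric.sphere (0 : ℂ) 1}

lemma flow_neg_localArg_mem_preimage_one (hϕp : ∀ t x, (p (ϕ t x) : ℂ) = exp (t * I) * p x)
    {b : ℂ} (hb : ‖b‖ = 1) (x : X) : ϕ (-localArg b (p x)) x ∈ p ⁻¹' {1} := by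
  have hx := exp_localArg_mul_I hb (norm_eq_of_mem_sphere (p x))
  apply Subtype.ext
  rw [hϕp]
  nth_rewrite 2 [← hx]
  rw [← exp_add]
  simp

lemma apply_flow_localArg_of_mem_preimage_one
    (hϕp : ∀ t x, (p (ϕ t x) : ℂ) = exp (t * I) * p x)
    {b : ℂ} (hb : ‖b‖ = 1) (u : Metric.sphere (0 : ℂ) 1) {y : X} (hy : y ∈ p ⁻¹' {1}) :
    p (ϕ (localArg b u) y) = u := by
  apply Subtype.ext
  rw [hϕp, hy, Metric.unitSphere.coe_one, mul_one,
    exp_localArg_mul_I hb (norm_eq_of_mem_sphere u)]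

noncomputable def Flow.trivializationOfCircleEquivariant (hp : Continuous p)
    (hϕp : ∀ t x, (p (ϕ t x) : ℂ) = exp (t * I) * p x) (b : Metric.sphere (0 : ℂ) 1) :
    Bundle.Trivialization (p ⁻¹' {1}) p where
  toFun x := (p x, ⟨ϕ (-localArg b (p x)) x,
    flow_neg_localArg_mem_preimage_one ϕ hϕp (norm_eq_of_mem_sphere b) x⟩)
  invFun y := ϕ (localArg b y.1) y.2
  source := p ⁻¹' slitCircle b
  target := slitCircle b ×ˢ Set.univ
  baseSet := slitCircle b
  map_source' _ hx := ⟨hx, trivial⟩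
  map_target' y hy := by
    rw [Set.mem_preimage,
      apply_flow_localArg_of_mem_preimage_one ϕ hϕp (norm_eq_of_mem_sphere b) y.1 y.2.2]
    exact hy.1
  left_inv' x _ := by rw [← ϕ.map_add, add_neg_cancel, ϕ.map_zero_apply]
  right_inv' y _ := by
    have hpy :=
      apply_flow_localArg_of_mem_preimage_one ϕ hϕp (norm_eq_of_mem_sphere b) y.1 y.2.2
    refine Prod.ext hpy (Subtype.ext ?_)
    dsimp only
    rw [hpy, ← ϕ.map_add, neg_add_cancel, ϕ.map_zero_apply]
  open_source := (isOpen_slitCircle b).preimage hp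
  open_target := (isOpen_slitCircle b).prod isOpen_univ
  continuousOn_toFun := by
    refine hp.continuousOn.prodMk (Topology.IsInducing.subtypeVal.continuousOn_iff.mpr ?_)
    exact ϕ.cont'.comp_continuousOn
      (((continuousOn_localArg_slitCircle b).comp hp.continuousOn fun _ hx => hx).neg.prodMk
        continuousOn_id)
  continuousOn_invFun :=
    ϕ.cont'.comp_continuousOn (((continuousOn_localArg_slitCircle b).comp continuousOn_fst
      fun _ hy => hy.1).prodMk (continuous_subtype_val.comp continuous_snd).continuousOn)
  open_baseSet := isOpen_slitCircle b
  source_eq := rfl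
  target_eq := rfl
  proj_toFun _ _ := rfl

end EquivariantCircleMap

noncomputable def weightedRotation {ι : Type*} (w : ι → ℝ) : Flow ℝ (EuclideanSpace ℂ ι) where
  toFun t z := WithLp.toLp 2 fun i => exp ((t * w i : ℝ) * I) * z i
  cont' := (PiLp.continuous_toLp 2 _).comp (continuous_pi fun i => by fun_prop)
  map_add' t s z := by
    ext i
    simp only [← mul_assoc, ← exp_add]
    push_cast
    ring_nf
  map_zero' z := by ext i; simp

lemma norm_weightedRotation {ι : Type*} [Fintype ι] (w : ι → ℝ) (t : ℝ)
    (z : EuclideanSpace ℂ ι) :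
    ‖weightedRotation w t z‖ = ‖z‖ := by
  simp [weightedRotation, EuclideanSpace.norm_eq, norm_exp]

lemma pbPoly_weightedRotation {n : ℕ} {a : Fin n → ℕ} (ha : ∀ i, a i ≠ 0) (t : ℝ)
    (z : EuclideanSpace ℂ (Fin n)) :
    pbPoly n a (weightedRotation (fun i => (a i : ℝ)⁻¹) t z) = exp (t * I) * pbPoly n a z := by
  simp only [pbPoly, weightedRotation, PiLp.toLp_apply, Finset.mul_sum, mul_pow, ← exp_nat_mul]
  congr! 3 with i
  push_cast
  field_simp [ha i]

lemma mem_sphere_diff_link_iff {n : ℕ} {a : Fin n → ℕ} {z : EuclideanSpace ℂ (Fin n)} :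
    z ∈ pbSphere n \ pbLink n a ↔ ‖z‖ = 1 ∧ pbPoly n a z ≠ 0 :=
  and_congr_right fun h => not_congr (and_iff_right h)

lemma isInvariant_sphere_diff_link {n : ℕ} {a : Fin n → ℕ} (ha : ∀ i, a i ≠ 0) :
    IsInvariant (weightedRotation fun i => (a i : ℝ)⁻¹) (pbSphere n \ pbLink n a) := by
  intro t z hz
  rw [mem_sphere_diff_link_iff] at hz ⊢
  rw [norm_weightedRotation, pbPoly_weightedRotation ha]
  exact ⟨hz.1, mul_ne_zero (exp_ne_zero _) hz.2⟩

lemma continuous_pbMilnorMap (n : ℕ) (a : Fin n → ℕ) : Continuous (pbMilnorMap n a) := by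
  have hf : Continuous fun z : ↥(pbSphere n \ pbLink n a) => pbPoly n a z := by
    unfold pbPoly; fun_prop
  refine Continuous.subtype_mk (hf.div (continuous_ofReal.comp hf.norm) fun z => ?_) _
  exact ofReal_ne_zero.mpr (norm_ne_zero_iff.mpr fun h => z.2.2 ⟨z.2.1, h⟩)

lemma pbMilnorMap_weightedRotation {n : ℕ} {a : Fin n → ℕ} (ha : ∀ i, a i ≠ 0) (t : ℝ)
    (z : ↥(pbSphere n \ pbLink n a)) :
    (pbMilnorMap n a ((weightedRotation _).restrict (isInvariant_sphere_diff_link ha) t z) : ℂ) =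
      exp (t * I) * pbMilnorMap n a z := by
  simp only [pbMilnorMap, Flow.coe_restrict_apply, pbPoly_weightedRotation ha, norm_mul,
    norm_exp_ofReal_mul_I, one_mul, mul_div_assoc]

theorem phamBrieskorn_milnor_fibration_sphere_general
    (n : ℕ) (a : Fin n → ℕ) (ha : ∀ i, 2 ≤ a i) :
    ∃ (F : Type) (tF : TopologicalSpace F),
      ∀ b : Metric.sphere (0 : ℂ) 1,
        ∃ e : @Bundle.Trivialization (Metric.sphere (0 : ℂ) 1) F
            (pbSphere n \ pbLink n a : Set (EuclideanSpace ℂ (Fin n)))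
            _ tF _ (pbMilnorMap n a),
          b ∈ e.baseSet := by
  have ha0 : ∀ i, a i ≠ 0 := fun i => Nat.ne_zero_of_lt (ha i)
  let ϕ := (weightedRotation fun i => (a i : ℝ)⁻¹).restrict (isInvariant_sphere_diff_link ha0)
  exact ⟨_, inferInstance, fun b =>
    ⟨ϕ.trivializationOfCircleEquivariant (continuous_pbMilnorMap n a)
      (pbMilnorMap_weightedRotation ha0) b, mem_slitCircle_self b⟩⟩

/-- **Milnor's fibration theorem on the sphere, for
Pham–Brieskorn polynomials.** The map `φ = f/|f| : S ∖ L_f → S¹` is the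
projection of a topological fiber bundle: there is a topological space `F`
such that every point of the circle lies in the base set of some
trivialization of `φ` with fiber `F`. -/
theorem phamBrieskorn_milnor_fibration_sphere
    (n : ℕ) (hn : 1 ≤ n) (a : Fin n → ℕ) (ha : ∀ i, 2 ≤ a i) :
    ∃ (F : Type) (tF : TopologicalSpace F),
      ∀ b : Metric.sphere (0 : ℂ) 1,
        ∃ e : @Bundle.Trivialization (Metric.sphere (0 : ℂ) 1) F
            (pbSphere n \ pbLink n a : Set (EuclideanSpace ℂ (Fin n)))
            _ tF _ (pbMilnorMap n a),
          b ∈ e.baseSet :=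
  phamBrieskorn_milnor_fibration_sphere_general n a ha
end

section
/- Let n ≥ 1, let a : Fin n → ℕ satisfy a i ≥ 2 for every i, and let f(z) = ∑ i, (z i)^(a i) on EuclideanSpace ℂ (Fin n). Fix δ > 0 and let N(δ) = f⁻¹(Metric.sphere (0:ℂ) δ) be the Milnor tube. Then the restriction of f to N(δ), as a map N(δ) → Metric.sphere (0:ℂ) δ, is the projection of a topological fiber bundle: there exist a topological space F and, for every point b of the circle of radius δ, a trivialization with fiber F whose base set contains b. -/
/-- The restriction of `f` to the Milnor tube `N(δ) = f⁻¹(∂D_δ)`, viewed as a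
map `N(δ) → ∂D_δ` onto the circle of radius `δ`. -/
noncomputable def pbTubeMap (n : ℕ) (a : Fin n → ℕ) (δ : ℝ)
    (z : (pbPoly n a ⁻¹' Metric.sphere (0 : ℂ) δ : Set (EuclideanSpace ℂ (Fin n)))) :
    Metric.sphere (0 : ℂ) δ :=
  ⟨pbPoly n a z.1, z.2⟩

/-!
`f` is weighted homogeneous: if `t i ^ a i = s` for all `i`, then `f (t • z) = s * f z` for the
coordinatewise product `t • z`. Near a point `b` of the circle, the branches
`t v i = (b / δ) ^ (1 / a i) * (v / b) ^ (1 / a i)` of the `a i`-th roots of `v / δ` depend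
continuously on `v` as long as `v / b` stays off the negative real axis, so
`(v, y) ↦ t v • y` identifies `(circle minus {-b}) × f⁻¹(δ)` with the part of the tube over
the circle minus `{-b}`, with inverse `z ↦ (f z, (t (f z))⁻¹ • z)`.
-/

open Set Complex

namespace Bundle.Trivialization

variable {Z B F : Type*} [TopologicalSpace Z] [TopologicalSpace B] [TopologicalSpace F]
  {proj : Z → B}

def ofSections (hproj : Continuous proj) {U : Set B} (hU : IsOpen U) (φ : Z → F)
    (σ : B × F → Z) (hφ : ContinuousOn φ (proj ⁻¹' U)) (hσ : ContinuousOn σ (U ×ˢ univ))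
    (proj_σ : ∀ b ∈ U, ∀ y, proj (σ (b, y)) = b)
    (σ_φ : ∀ z, proj z ∈ U → σ (proj z, φ z) = z)
    (φ_σ : ∀ b ∈ U, ∀ y, φ (σ (b, y)) = y) : Trivialization F proj where
  toFun z := (proj z, φ z)
  invFun := σ
  source := proj ⁻¹' U
  target := U ×ˢ univ
  map_source' _ hz := ⟨hz, trivial⟩
  map_target' p hp := by
    simpa only [mem_preimage, proj_σ p.1 hp.1 p.2] using hp.1
  left_inv' z hz := σ_φ z hz
  right_inv' p hp := Prod.ext (proj_σ p.1 hp.1 p.2) (φ_σ p.1 hp.1 p.2)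
  open_source := hU.preimage hproj
  open_target := hU.prod isOpen_univ
  continuousOn_toFun := hproj.continuousOn.prodMk hφ
  continuousOn_invFun := hσ
  baseSet := U
  open_baseSet := hU
  source_eq := rfl
  target_eq := rfl
  proj_toFun _ _ := rfl

end Bundle.Trivialization

namespace PhamBrieskorn

variable {n : ℕ}

lemma continuous_pbPoly (a : Fin n → ℕ) : Continuous (pbPoly n a) :=
  continuous_finsetSum _ fun i _ => (PiLp.continuous_apply 2 _ i).pow _

noncomputable def weightedMul (t : Fin n → ℂ) (z : EuclideanSpace ℂ (Fin n)) :
    EuclideanSpace ℂ (Fin n) :=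
  WithLp.toLp 2 fun i => t i * z i

@[simp]
lemma weightedMul_apply (t : Fin n → ℂ) (z : EuclideanSpace ℂ (Fin n)) (i : Fin n) :
    weightedMul t z i = t i * z i :=
  rfl

lemma weightedMul_inv_weightedMul {t : Fin n → ℂ} (ht : ∀ i, t i ≠ 0)
    (z : EuclideanSpace ℂ (Fin n)) : weightedMul t⁻¹ (weightedMul t z) = z := by
  ext i
  simp [inv_mul_cancel_left₀ (ht i)]

lemma weightedMul_weightedMul_inv {t : Fin n → ℂ} (ht : ∀ i, t i ≠ 0)
    (z : EuclideanSpace ℂ (Fin n)) : weightedMul t (weightedMul t⁻¹ z) = z := by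
  ext i
  simp [mul_inv_cancel_left₀ (ht i)]

lemma pbPoly_weightedMul {a : Fin n → ℕ} {t : Fin n → ℂ} {s : ℂ} (ht : ∀ i, t i ^ a i = s)
    (z : EuclideanSpace ℂ (Fin n)) : pbPoly n a (weightedMul t z) = s * pbPoly n a z := by
  simp only [pbPoly, weightedMul_apply, mul_pow, ht, Finset.mul_sum]

lemma _root_.ContinuousOn.weightedMul {X : Type*} [TopologicalSpace X] {t : X → Fin n → ℂ}
    {g : X → EuclideanSpace ℂ (Fin n)} {s : Set X} (ht : ∀ i, ContinuousOn (fun x => t x i) s)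
    (hg : ContinuousOn g s) : ContinuousOn (fun x => weightedMul (t x) (g x)) s :=
  (PiLp.continuous_toLp 2 _).comp_continuousOn <| continuousOn_pi.2 fun i =>
    (ht i).mul ((PiLp.continuous_apply 2 _ i).comp_continuousOn hg)

noncomputable def rootWeights (a : Fin n → ℕ) (w : ℂ) : Fin n → ℂ :=
  fun i => w ^ ((a i : ℂ)⁻¹)

lemma rootWeights_pow {a : Fin n → ℕ} {i : Fin n} (ha : a i ≠ 0) (w : ℂ) :
    rootWeights a w i ^ a i = w :=
  cpow_nat_inv_pow w ha

lemma rootWeights_ne_zero (a : Fin n → ℕ) {w : ℂ} (hw : w ≠ 0) (i : Fin n) :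
    rootWeights a w i ≠ 0 := by
  simp [rootWeights, cpow_eq_zero_iff, hw]

lemma continuousOn_rootWeights (a : Fin n → ℕ) (i : Fin n) :
    ContinuousOn (fun w => rootWeights a w i) slitPlane :=
  fun _ hw => (continuousAt_cpow_const hw).continuousWithinAt

section Tube

variable {a : Fin n → ℕ} {δ : ℝ}

noncomputable def tubeWeights (a : Fin n → ℕ) (δ : ℝ) (b v : ℂ) : Fin n → ℂ :=
  rootWeights a (b / δ) * rootWeights a (v / b)

lemma tubeWeights_pow (ha : ∀ i, a i ≠ 0) {b : ℂ} (hb : b ≠ 0) (v : ℂ) (i : Fin n) :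
    tubeWeights a δ b v i ^ a i = v / δ := by
  rw [tubeWeights, Pi.mul_apply, mul_pow, rootWeights_pow (ha i), rootWeights_pow (ha i)]
  field_simp

lemma tubeWeights_ne_zero (hδ : δ ≠ 0) {b v : ℂ} (hb : b ≠ 0) (hv : v ≠ 0) (i : Fin n) :
    tubeWeights a δ b v i ≠ 0 :=
  mul_ne_zero (rootWeights_ne_zero a (div_ne_zero hb (ofReal_ne_zero.2 hδ)) i)
    (rootWeights_ne_zero a (div_ne_zero hv hb) i)

lemma continuousOn_tubeWeights (b : ℂ) (i : Fin n) :
    ContinuousOn (fun v => tubeWeights a δ b v i) ((· / b) ⁻¹' slitPlane) :=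
  continuousOn_const.mul <|
    (continuousOn_rootWeights a i).comp (continuousOn_id.div_const b) fun _ hv => hv

lemma pbPoly_weightedMul_tubeWeights (ha : ∀ i, a i ≠ 0) (hδ : δ ≠ 0) {b : ℂ} (hb : b ≠ 0)
    (v : ℂ) {y : EuclideanSpace ℂ (Fin n)} (hy : pbPoly n a y = δ) :
    pbPoly n a (weightedMul (tubeWeights a δ b v) y) = v := by
  rw [pbPoly_weightedMul (tubeWeights_pow ha hb v), hy, div_mul_cancel₀ _ (ofReal_ne_zero.2 hδ)]

lemma pbPoly_weightedMul_inv_tubeWeights (ha : ∀ i, a i ≠ 0) {b : ℂ} (hb : b ≠ 0)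
    {z : EuclideanSpace ℂ (Fin n)} (hz : pbPoly n a z ≠ 0) :
    pbPoly n a (weightedMul (tubeWeights a δ b (pbPoly n a z))⁻¹ z) = δ := by
  rw [pbPoly_weightedMul fun i => by rw [Pi.inv_apply, inv_pow, tubeWeights_pow ha hb]]
  field_simp

lemma continuous_pbTubeMap (a : Fin n → ℕ) (δ : ℝ) : Continuous (pbTubeMap n a δ) :=
  (continuous_pbPoly a |>.comp continuous_subtype_val).subtype_mk _

noncomputable def tubeTrivialization (ha : ∀ i, a i ≠ 0) (hδ : δ ≠ 0)
    (b : Metric.sphere (0 : ℂ) δ) :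
    Bundle.Trivialization (pbPoly n a ⁻¹' {(δ : ℂ)}) (pbTubeMap n a δ) :=
  have hb : (b : ℂ) ≠ 0 := ne_zero_of_mem_sphere hδ b
  have pbPoly_ne_zero (z : pbPoly n a ⁻¹' Metric.sphere (0 : ℂ) δ) : pbPoly n a z ≠ 0 :=
    ne_zero_of_mem_sphere hδ (pbTubeMap n a δ z)
  Bundle.Trivialization.ofSections (continuous_pbTubeMap a δ)
    (U := Subtype.val ⁻¹' ((· / (b : ℂ)) ⁻¹' slitPlane))
    ((isOpen_slitPlane.preimage (continuous_id.div_const (b : ℂ))).preimage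
      continuous_subtype_val)
    (fun z => ⟨weightedMul (tubeWeights a δ b (pbPoly n a z))⁻¹ z,
      pbPoly_weightedMul_inv_tubeWeights ha hb (pbPoly_ne_zero z)⟩)
    (fun p => ⟨weightedMul (tubeWeights a δ b p.1) p.2, by
      rw [mem_preimage, pbPoly_weightedMul_tubeWeights ha hδ hb _ p.2.2]
      exact p.1.2⟩)
    (Topology.IsInducing.subtypeVal.continuousOn_iff.2 <| ContinuousOn.weightedMul
      (fun i => ((continuousOn_tubeWeights (b : ℂ) i).comp
        (continuous_pbPoly a |>.comp continuous_subtype_val).continuousOn fun _ hz => hz).inv₀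
        fun z _ => tubeWeights_ne_zero hδ hb (pbPoly_ne_zero z) i)
      continuous_subtype_val.continuousOn)
    (Topology.IsInducing.subtypeVal.continuousOn_iff.2 <| ContinuousOn.weightedMul
      (fun i => (continuousOn_tubeWeights (b : ℂ) i).comp
        (continuous_subtype_val.comp continuous_fst).continuousOn fun _ hp => hp.1)
      (continuous_subtype_val.comp continuous_snd).continuousOn)
    (fun _ _ y => Subtype.ext (pbPoly_weightedMul_tubeWeights ha hδ hb _ y.2))
    (fun z _ => Subtype.ext <|
      weightedMul_weightedMul_inv (tubeWeights_ne_zero (a := a) hδ hb (pbPoly_ne_zero z)) z)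
    (fun v _ y => Subtype.ext <| by
      have hv : (v : ℂ) ≠ 0 := ne_zero_of_mem_sphere hδ v
      simp only [pbPoly_weightedMul_tubeWeights ha hδ hb _ y.2]
      exact weightedMul_inv_weightedMul (tubeWeights_ne_zero hδ hb hv) _)

lemma mem_tubeTrivialization_baseSet_self (ha : ∀ i, a i ≠ 0) (hδ : δ ≠ 0)
    (b : Metric.sphere (0 : ℂ) δ) : b ∈ (tubeTrivialization ha hδ b).baseSet := by
  change (b : ℂ) / b ∈ slitPlane
  rw [div_self (ne_zero_of_mem_sphere hδ b)]
  exact one_mem_slitPlane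

end Tube

end PhamBrieskorn

theorem phamBrieskorn_milnor_fibration_tube_general
    (n : ℕ) (a : Fin n → ℕ) (ha : ∀ i, 2 ≤ a i)
    (δ : ℝ) (hδ : 0 < δ) :
    ∃ (F : Type) (tF : TopologicalSpace F),
      ∀ b : Metric.sphere (0 : ℂ) δ,
        ∃ e : @Bundle.Trivialization (Metric.sphere (0 : ℂ) δ) F
            (pbPoly n a ⁻¹' Metric.sphere (0 : ℂ) δ : Set (EuclideanSpace ℂ (Fin n)))
            _ tF _ (pbTubeMap n a δ),
          b ∈ e.baseSet := by
  have ha' : ∀ i, a i ≠ 0 := fun i => by have := ha i; omega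
  exact ⟨pbPoly n a ⁻¹' {(δ : ℂ)}, inferInstance, fun b =>
    ⟨PhamBrieskorn.tubeTrivialization ha' hδ.ne' b,
      PhamBrieskorn.mem_tubeTrivialization_baseSet_self ha' hδ.ne' b⟩⟩

/-- **the fibration on the Milnor tube.** For every `δ > 0`,
the restriction of the Pham–Brieskorn polynomial `f` to the Milnor tube
`N(δ) = f⁻¹(∂D_δ)`, as a map `N(δ) → ∂D_δ`, is the projection of a
topological fiber bundle: there is a topological space `F` such that every
point of the circle of radius `δ` lies in the base set of some
trivialization with fiber `F`. -/
theorem phamBrieskorn_milnor_fibration_tube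
    (n : ℕ) (hn : 1 ≤ n) (a : Fin n → ℕ) (ha : ∀ i, 2 ≤ a i)
    (δ : ℝ) (hδ : 0 < δ) :
    ∃ (F : Type) (tF : TopologicalSpace F),
      ∀ b : Metric.sphere (0 : ℂ) δ,
        ∃ e : @Bundle.Trivialization (Metric.sphere (0 : ℂ) δ) F
            (pbPoly n a ⁻¹' Metric.sphere (0 : ℂ) δ : Set (EuclideanSpace ℂ (Fin n)))
            _ tF _ (pbTubeMap n a δ),
          b ∈ e.baseSet :=
  phamBrieskorn_milnor_fibration_tube_general n a ha δ hδ
end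

section
/- For every n ≥ 0, the complex affine quadric {z : EuclideanSpace ℂ (Fin (n+1)) // ∑ i, (z i)^2 = 1} is homotopy equivalent to the unit sphere in EuclideanSpace ℝ (Fin (n+1)): there is a continuous homotopy equivalence between these two topological spaces (in Mathlib, the type ContinuousMap.HomotopyEquiv between them is nonempty). -/
noncomputable section QuadricAux

open Finset

variable {n : ℕ}

/-- squared norm of the imaginary part -/
private def QY (z : EuclideanSpace ℂ (Fin (n + 1))) : ℝ := ∑ i, (z i).im ^ 2

private lemma QY_nonneg (z : EuclideanSpace ℂ (Fin (n + 1))) : 0 ≤ QY z :=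
  Finset.sum_nonneg fun i _ => sq_nonneg _

private lemma QY_pos (z : EuclideanSpace ℂ (Fin (n + 1))) : 0 < 1 + QY z := by
  have := QY_nonneg z; linarith

private lemma contQY : Continuous (QY (n := n)) := by
  apply continuous_finset_sum
  intro i _
  exact (Complex.continuous_im.comp (EuclideanSpace.proj (i : Fin (n+1)) : _ →L[ℂ] ℂ).continuous).pow 2

/-- the basic re/im identities on the quadric -/
private lemma quadric_identities {z : EuclideanSpace ℂ (Fin (n + 1))}
    (hz : ∑ i, z i ^ 2 = 1) :
    (∑ i, (z i).re ^ 2) = 1 + QY z ∧ (∑ i, (z i).re * (z i).im) = 0 := by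
  have h1 := congrArg Complex.re hz
  have h2 := congrArg Complex.im hz
  simp only [Complex.re_sum, Complex.im_sum, pow_two, Complex.mul_re, Complex.mul_im,
    Complex.one_re, Complex.one_im] at h1 h2
  rw [Finset.sum_sub_distrib] at h1
  constructor
  · have : ∑ i, (z i).re ^ 2 - ∑ i, (z i).im ^ 2 = 1 := by
      simpa [pow_two] using h1
    unfold QY; linarith
  · have : (2 : ℝ) * ∑ i, (z i).re * (z i).im = 0 := by
      rw [Finset.mul_sum]
      rw [← h2]
      apply Finset.sum_congr rfl
      intro i _; ring
    linarith

/-- the retraction quadric → sphere -/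
private def fQ (z : EuclideanSpace ℂ (Fin (n + 1))) : EuclideanSpace ℝ (Fin (n + 1)) :=
  (WithLp.equiv 2 _).symm fun i => (z i).re / Real.sqrt (1 + QY z)

private lemma fQ_apply (z : EuclideanSpace ℂ (Fin (n + 1))) (i : Fin (n + 1)) :
    fQ z i = (z i).re / Real.sqrt (1 + QY z) := rfl

private lemma fQ_mem {z : EuclideanSpace ℂ (Fin (n + 1))} (hz : ∑ i, z i ^ 2 = 1) :
    fQ z ∈ Metric.sphere (0 : EuclideanSpace ℝ (Fin (n + 1))) 1 := by
  rw [mem_sphere_zero_iff_norm, EuclideanSpace.norm_eq]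
  have hX := (quadric_identities hz).1
  have hD := QY_pos z
  have hsq : Real.sqrt (1 + QY z) ^ 2 = 1 + QY z := Real.sq_sqrt hD.le
  have : ∑ i, ‖fQ z i‖ ^ 2 = 1 := by
    simp only [fQ_apply, Real.norm_eq_abs, sq_abs, div_pow]
    rw [← Finset.sum_div, hX, hsq, div_self hD.ne']
  rw [this, Real.sqrt_one]

/-- the inclusion sphere → quadric -/
private def gQ (x : EuclideanSpace ℝ (Fin (n + 1))) : EuclideanSpace ℂ (Fin (n + 1)) :=
  (WithLp.equiv 2 _).symm fun i => (x i : ℂ)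

private lemma gQ_apply (x : EuclideanSpace ℝ (Fin (n + 1))) (i : Fin (n + 1)) :
    gQ x i = (x i : ℂ) := rfl

private lemma sum_sq_of_mem_sphere {x : EuclideanSpace ℝ (Fin (n + 1))}
    (hx : x ∈ Metric.sphere (0 : EuclideanSpace ℝ (Fin (n + 1))) 1) :
    ∑ i, x i ^ 2 = 1 := by
  rw [mem_sphere_zero_iff_norm, EuclideanSpace.norm_eq] at hx
  have h2 : ∑ i, ‖x i‖ ^ 2 = ∑ i, x i ^ 2 := by
    simp [Real.norm_eq_abs, sq_abs]
  rw [h2] at hx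
  have hnn : 0 ≤ ∑ i, x i ^ 2 := Finset.sum_nonneg fun i _ => sq_nonneg _
  nlinarith [Real.sq_sqrt hnn, hx]

private lemma gQ_mem {x : EuclideanSpace ℝ (Fin (n + 1))}
    (hx : x ∈ Metric.sphere (0 : EuclideanSpace ℝ (Fin (n + 1))) 1) :
    ∑ i, gQ x i ^ 2 = 1 := by
  have : ∑ i, (gQ x i) ^ 2 = ((∑ i, x i ^ 2 : ℝ) : ℂ) := by
    push_cast
    simp [gQ_apply]
  rw [this, sum_sq_of_mem_sphere hx, Complex.ofReal_one]

private lemma QY_gQ (x : EuclideanSpace ℝ (Fin (n + 1))) : QY (gQ x) = 0 := by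
  unfold QY
  simp [gQ_apply]

/-- fQ ∘ gQ = id on the sphere -/
private lemma fQ_gQ (x : EuclideanSpace ℝ (Fin (n + 1))) : fQ (gQ x) = x := by
  apply PiLp.ext
  intro i
  rw [fQ_apply, gQ_apply, QY_gQ]
  simp

/-- the scale factor -/
private def sQ (t : ℝ) (z : EuclideanSpace ℂ (Fin (n + 1))) : ℝ :=
  Real.sqrt ((1 + (1 - t) ^ 2 * QY z) / (1 + QY z))

/-- the homotopy map -/
private def HQ (t : ℝ) (z : EuclideanSpace ℂ (Fin (n + 1))) : EuclideanSpace ℂ (Fin (n + 1)) :=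
  (WithLp.equiv 2 _).symm fun i =>
    (↑(sQ t z * (z i).re) + ↑((1 - t) * (z i).im) * Complex.I : ℂ)

private lemma HQ_apply (t : ℝ) (z : EuclideanSpace ℂ (Fin (n + 1))) (i : Fin (n + 1)) :
    HQ t z i = (↑(sQ t z * (z i).re) + ↑((1 - t) * (z i).im) * Complex.I : ℂ) := rfl

private lemma sQ_sq (t : ℝ) (z : EuclideanSpace ℂ (Fin (n + 1))) :
    sQ t z ^ 2 = (1 + (1 - t) ^ 2 * QY z) / (1 + QY z) := by
  apply Real.sq_sqrt
  have h1 := QY_nonneg z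
  have h2 := QY_pos z
  positivity

private lemma HQ_mem {z : EuclideanSpace ℂ (Fin (n + 1))} (hz : ∑ i, z i ^ 2 = 1) (t : ℝ) :
    ∑ i, HQ t z i ^ 2 = 1 := by
  obtain ⟨hX, hM⟩ := quadric_identities hz
  have hD := QY_pos z
  have key : ∀ i : Fin (n+1), HQ t z i ^ 2 =
      ((sQ t z ^ 2 * (z i).re ^ 2 - (1 - t) ^ 2 * (z i).im ^ 2 : ℝ) : ℂ)
      + ((2 * sQ t z * (1 - t) * ((z i).re * (z i).im) : ℝ) : ℂ) * Complex.I := by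
    intro i
    rw [HQ_apply]
    have base : ∀ a b : ℝ, ((a:ℂ) + (b:ℂ) * Complex.I) ^ 2
        = ((a^2 - b^2 : ℝ) : ℂ) + ((2*a*b : ℝ) : ℂ) * Complex.I := by
      intro a b
      push_cast
      linear_combination ((b:ℂ)^2) * Complex.I_sq
    rw [base]
    push_cast
    ring
  rw [Finset.sum_congr rfl fun i _ => key i]
  rw [Finset.sum_add_distrib, ← Finset.sum_mul]
  have e1 : ∑ i, ((sQ t z ^ 2 * (z i).re ^ 2 - (1 - t) ^ 2 * (z i).im ^ 2 : ℝ) : ℂ)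
      = ((sQ t z ^ 2 * (1 + QY z) - (1 - t) ^ 2 * QY z : ℝ) : ℂ) := by
    rw [← Complex.ofReal_sum]
    congr 1
    rw [Finset.sum_sub_distrib, ← Finset.mul_sum, ← Finset.mul_sum, hX]
    rfl
  have e2 : ∑ i, ((2 * sQ t z * (1 - t) * ((z i).re * (z i).im) : ℝ) : ℂ) = 0 := by
    rw [← Complex.ofReal_sum, ← Finset.mul_sum, hM]
    simp
  rw [e1, e2, zero_mul, add_zero, sQ_sq, div_mul_cancel₀ _ hD.ne']
  push_cast
  ring

private lemma HQ_zero (z : EuclideanSpace ℂ (Fin (n + 1))) : HQ 0 z = z := by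
  apply PiLp.ext
  intro i
  rw [HQ_apply]
  have : sQ 0 z = 1 := by
    unfold sQ
    rw [show (1:ℝ) - 0 = 1 by ring, one_pow, one_mul, div_self (QY_pos z).ne', Real.sqrt_one]
  rw [this]
  push_cast
  simp [Complex.re_add_im]

private lemma HQ_one (z : EuclideanSpace ℂ (Fin (n + 1))) : HQ 1 z = gQ (fQ z) := by
  apply PiLp.ext
  intro i
  rw [HQ_apply, gQ_apply, fQ_apply]
  have hs : sQ 1 z = 1 / Real.sqrt (1 + QY z) := by
    unfold sQ
    rw [sub_self, zero_pow (by norm_num), zero_mul, add_zero, one_div, Real.sqrt_inv, one_div]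
  rw [hs, sub_self, zero_mul]
  push_cast
  ring

private lemma cont_re (i : Fin (n + 1)) :
    Continuous fun z : EuclideanSpace ℂ (Fin (n + 1)) => (z i).re :=
  Complex.continuous_re.comp (EuclideanSpace.proj i : _ →L[ℂ] ℂ).continuous

private lemma cont_im (i : Fin (n + 1)) :
    Continuous fun z : EuclideanSpace ℂ (Fin (n + 1)) => (z i).im :=
  Complex.continuous_im.comp (EuclideanSpace.proj i : _ →L[ℂ] ℂ).continuous

private lemma cont_fQ : Continuous (fQ (n := n)) := by
  unfold fQ
  refine (PiLp.continuous_toLp 2 _).comp (continuous_pi fun i => ?_)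
  exact (cont_re i).div (Real.continuous_sqrt.comp (continuous_const.add contQY))
    fun z => (Real.sqrt_pos.mpr (QY_pos z)).ne'

private lemma cont_gQ : Continuous (gQ (n := n)) := by
  unfold gQ
  refine (PiLp.continuous_toLp 2 _).comp (continuous_pi fun i => ?_)
  exact Complex.continuous_ofReal.comp (EuclideanSpace.proj i : _ →L[ℝ] ℝ).continuous

private lemma cont_HQ :
    Continuous fun p : ℝ × EuclideanSpace ℂ (Fin (n + 1)) => HQ p.1 p.2 := by
  unfold HQ
  refine (PiLp.continuous_toLp 2 _).comp (continuous_pi fun i => ?_)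
  have hs : Continuous fun p : ℝ × EuclideanSpace ℂ (Fin (n + 1)) => sQ p.1 p.2 := by
    unfold sQ
    refine Real.continuous_sqrt.comp (Continuous.div ?_ ?_ fun p => (QY_pos p.2).ne')
    · exact continuous_const.add (((continuous_const.sub continuous_fst).pow 2).mul
        (contQY.comp continuous_snd))
    · exact continuous_const.add (contQY.comp continuous_snd)
  refine Continuous.add ?_ ?_
  · exact Complex.continuous_ofReal.comp (hs.mul ((cont_re i).comp continuous_snd))
  · exact (Complex.continuous_ofReal.comp
      ((continuous_const.sub continuous_fst).mul ((cont_im i).comp continuous_snd))).mul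
      continuous_const

end QuadricAux

/-- For every `n ≥ 0`, the complex affine quadric
`{z ∈ ℂ^{n+1} : ∑ zᵢ² = 1}` (the global Milnor fiber of `z ↦ ∑ zᵢ²`) is
homotopy equivalent to the unit sphere `Sⁿ` in `ℝ^{n+1}`. -/
theorem quadric_homotopyEquiv_sphere (n : ℕ) :
    Nonempty
      (ContinuousMap.HomotopyEquiv
        {z : EuclideanSpace ℂ (Fin (n + 1)) // ∑ i, z i ^ 2 = 1}
        (Metric.sphere (0 : EuclideanSpace ℝ (Fin (n + 1))) 1)) := by
  set Q := {z : EuclideanSpace ℂ (Fin (n + 1)) // ∑ i, z i ^ 2 = 1} with hQ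
  set S := Metric.sphere (0 : EuclideanSpace ℝ (Fin (n + 1))) 1 with hS
  let F : C(Q, S) := ⟨fun z => ⟨fQ z.1, fQ_mem z.2⟩,
    (cont_fQ.comp continuous_subtype_val).subtype_mk _⟩
  let G : C(S, Q) := ⟨fun x => ⟨gQ x.1, gQ_mem x.2⟩,
    (cont_gQ.comp continuous_subtype_val).subtype_mk _⟩
  have hGF : ContinuousMap.Homotopy (ContinuousMap.id Q) (G.comp F) := {
    toFun := fun p => ⟨HQ (p.1 : ℝ) p.2.1, HQ_mem p.2.2 _⟩
    continuous_toFun :=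
      (cont_HQ.comp ((continuous_subtype_val.comp continuous_fst).prodMk
        (continuous_subtype_val.comp continuous_snd))).subtype_mk _
    map_zero_left := fun z => Subtype.ext (by simpa using HQ_zero z.1)
    map_one_left := fun z => Subtype.ext (by exact HQ_one z.1) }
  have hFG : F.comp G = ContinuousMap.id S :=
    ContinuousMap.ext fun x => Subtype.ext (fQ_gQ x.1)
  exact ⟨{ toFun := F, invFun := G,
           left_inv := ⟨hGF.symm⟩,
           right_inv := hFG ▸ ContinuousMap.Homotopic.refl _ }⟩
end

section
/- Let n ≥ 1 and define f : EuclideanSpace ℂ (Fin n) × EuclideanSpace ℂ (Fin n) → ℂ × ℝ by f(x, y) = (2·⟪x, y⟫, ‖y‖² − ‖x‖²), where ⟪·,·⟫ is the Hermitian inner product. Then f satisfies the Milnor condition at the origin in the strongest sense: for every (x, y) ≠ (0, 0), the real Fréchet derivative fderiv ℝ f (x,y) is a surjective real-linear map onto ℂ × ℝ. -/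
/-!
At `(x, y)` the derivative of `f(x, y) = (2⟪x, y⟫, ‖y‖² − ‖x‖²)` sends `(w̄ • y − t • x, w • x + t • y)`
to `2 (‖x‖² + ‖y‖²) • (w, t)`: in the second component the cross terms `w⟪y, x⟫` and `w̄⟪x, y⟫` are
complex conjugates, so their real parts cancel. Away from the origin `‖x‖² + ‖y‖² > 0`, hence every
`(w, t)` is attained.
-/

open RCLike ComplexConjugate ContinuousLinearMap

section Milnor

variable (𝕜 : Type*) {E : Type*} [RCLike 𝕜] [NormedAddCommGroup E] [InnerProductSpace 𝕜 E]

local notation "⟪" x ", " y "⟫" => inner 𝕜 x y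

def milnorMap (p : E × E) : 𝕜 × ℝ := (2 * ⟪p.1, p.2⟫, ‖p.2‖ ^ 2 - ‖p.1‖ ^ 2)

variable {𝕜}

def milnorLift (x y : E) (w : 𝕜) (t : ℝ) : E × E :=
  (conj w • y - (t : 𝕜) • x, w • x + (t : 𝕜) • y)

variable [NormedSpace ℝ E]

theorem fderiv_milnorMap_apply (p v : E × E) :
    fderiv ℝ (milnorMap 𝕜) p v =
      (2 * (⟪p.1, v.2⟫ + ⟪v.1, p.2⟫), 2 * (re ⟪p.2, v.2⟫ - re ⟪p.1, v.1⟫)) := by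
  have hinner := (hasFDerivAt_fst.inner 𝕜 hasFDerivAt_snd (x := p)).const_mul (2 : 𝕜)
  have hnorm := reCLM.hasFDerivAt.comp p
    ((hasFDerivAt_snd.inner 𝕜 hasFDerivAt_snd).sub (hasFDerivAt_fst.inner 𝕜 hasFDerivAt_fst))
  have hderiv := (hinner.prodMk hnorm).congr_of_eventuallyEq (f₁ := milnorMap 𝕜) <|
    .of_forall fun q => by simp [milnorMap]
  rw [hderiv.fderiv]
  simp only [prod_apply, smul_apply, sub_apply, comp_apply, coe_fst', coe_snd',
    fderivInnerCLM_apply, reCLM_apply, smul_eq_mul, map_sub, map_add,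
    inner_re_symm (𝕜 := 𝕜) v.1, inner_re_symm (𝕜 := 𝕜) v.2]
  exact Prod.ext rfl (by ring)

theorem fderiv_milnorMap_apply_milnorLift (x y : E) (w : 𝕜) (t : ℝ) :
    fderiv ℝ (milnorMap 𝕜) (x, y) (milnorLift x y w t) =
      (2 * ((‖x‖ ^ 2 + ‖y‖ ^ 2 : ℝ) : 𝕜) * w, 2 * (‖x‖ ^ 2 + ‖y‖ ^ 2) * t) := by
  have hfst : ⟪x, w • x + (t : 𝕜) • y⟫ + ⟪conj w • y - (t : 𝕜) • x, y⟫ =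
      (‖x‖ ^ 2 + ‖y‖ ^ 2 : ℝ) * w := by
    simp only [inner_add_right, inner_sub_left, inner_smul_right, inner_smul_left, conj_conj,
      conj_ofReal, inner_self_eq_norm_sq_to_K]
    push_cast
    ring
  have hsnd : re ⟪y, w • x + (t : 𝕜) • y⟫ - re ⟪x, conj w • y - (t : 𝕜) • x⟫ =
      (‖x‖ ^ 2 + ‖y‖ ^ 2) * t := by
    simp only [inner_add_right, inner_sub_right, inner_smul_right, inner_self_eq_norm_sq_to_K,
      map_add, map_sub, ← inner_conj_symm x y, ← map_mul, conj_re]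
    simp only [← ofReal_pow, ← ofReal_mul, ofReal_re, mul_comm (t : 𝕜)]
    ring
  rw [fderiv_milnorMap_apply, milnorLift, hfst, hsnd, mul_assoc, mul_assoc]

theorem surjective_fderiv_milnorMap {p : E × E} (hp : p ≠ 0) :
    Function.Surjective (fderiv ℝ (milnorMap 𝕜) p) := by
  obtain ⟨x, y⟩ := p
  have hs : 0 < ‖x‖ ^ 2 + ‖y‖ ^ 2 := by
    rcases eq_or_ne x 0 with rfl | hx
    · have hy : y ≠ 0 := fun hy => hp (by simp [hy])
      positivity
    · positivity
  generalize hs_def : ‖x‖ ^ 2 + ‖y‖ ^ 2 = s at hs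
  rintro ⟨c, r⟩
  refine ⟨milnorLift x y (c / (2 * s)) (r / (2 * s)), ?_⟩
  have hs' : (s : 𝕜) ≠ 0 := by exact_mod_cast hs.ne'
  rw [fderiv_milnorMap_apply_milnorLift, hs_def]
  exact Prod.ext (by field_simp) (by field_simp)

end Milnor

theorem milnor_example_satisfies_milnor_condition_general
    (n : ℕ) :
    ∀ p : EuclideanSpace ℂ (Fin n) × EuclideanSpace ℂ (Fin n), p ≠ 0 →
      Function.Surjective
        (fderiv ℝ
          (fun q : EuclideanSpace ℂ (Fin n) × EuclideanSpace ℂ (Fin n) =>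
            ((2 * (inner ℂ q.1 q.2 : ℂ), ‖q.2‖ ^ 2 - ‖q.1‖ ^ 2) : ℂ × ℝ)) p) :=
  fun _ hp => surjective_fderiv_milnorMap hp

/-- Milnor's example
`f(x, y) = (2⟪x, y⟫, ‖y‖² − ‖x‖²) : ℂⁿ × ℂⁿ → ℂ × ℝ` satisfies the Milnor
condition at the origin in the strongest sense: at every point
`(x, y) ≠ (0, 0)` the real Fréchet derivative is surjective onto `ℂ × ℝ`. -/
theorem milnor_example_satisfies_milnor_condition
    (n : ℕ) (hn : 1 ≤ n) :
    ∀ p : EuclideanSpace ℂ (Fin n) × EuclideanSpace ℂ (Fin n), p ≠ 0 →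
      Function.Surjective
        (fderiv ℝ
          (fun q : EuclideanSpace ℂ (Fin n) × EuclideanSpace ℂ (Fin n) =>
            ((2 * (inner ℂ q.1 q.2 : ℂ), ‖q.2‖ ^ 2 - ‖q.1‖ ^ 2) : ℂ × ℝ)) p) :=
  milnor_example_satisfies_milnor_condition_general n
end

section
/- Let n ≥ 1, let σ be a permutation of Fin n, and let a : Fin n → ℕ satisfy a i ≥ 2 for every i. Define the twisted Pham–Brieskorn polynomial f : (Fin n → ℂ) → ℂ by f(z) = ∑ i, (z i)^(a i) * conj(z (σ i)). Then f has an isolated critical point at the origin as a real analytic map: there exists ε > 0 such that for every z with 0 < ‖z‖ < ε, the real Fréchet derivative fderiv ℝ f z is a surjective real-linear map onto ℂ (viewing ℂⁿ and ℂ as real vector spaces). -/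
open Complex

/-- A real-linear map `c ↦ α c + β conj c` on `ℂ` is surjective when `‖α‖ ≠ ‖β‖`. -/
lemma tpb_solve (α β : ℂ) (h : ‖α‖ ≠ ‖β‖) (u : ℂ) :
    ∃ c : ℂ, α * c + β * (starRingEnd ℂ) c = u := by
  set D : ℝ := Complex.normSq α - Complex.normSq β with hD
  have hD0 : D ≠ 0 := by
    have h2 : Complex.normSq α ≠ Complex.normSq β := by
      intro hh
      apply h
      rw [Complex.norm_def,
        Complex.norm_def, hh]
    simpa [hD, sub_eq_zero] using h2
  refine ⟨((starRingEnd ℂ) α * u - β * (starRingEnd ℂ) u) / (D : ℂ), ?_⟩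
  have hDc : ((D : ℂ)) ≠ 0 := by exact_mod_cast Complex.ofReal_ne_zero.mpr hD0
  have hα := Complex.mul_conj α
  have hβ := Complex.mul_conj β
  simp only [map_div₀, map_sub, map_mul, Complex.conj_conj, Complex.conj_ofReal]
  field_simp
  push_cast [hD]
  linear_combination u * hα - u * hβ

/-- The combinatorial heart: the moduli equations cannot all hold for a nonzero point. -/
lemma tpb_orbit (n : ℕ) (σ : Equiv.Perm (Fin n)) (a : Fin n → ℕ) (ha : ∀ i, 2 ≤ a i)
    (r : Fin n → ℝ) (hr : ∀ i, 0 ≤ r i) (j0 : Fin n) (hj0 : 0 < r j0)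
    (heq : ∀ j, (a j : ℝ) * r j ^ (a j - 1) * r (σ j) = r (σ⁻¹ j) ^ a (σ⁻¹ j)) :
    False := by
  classical
  have step : ∀ i, 0 < r i → 0 < r (σ i) := by
    intro i hi
    have h := heq (σ i)
    rw [Equiv.Perm.inv_def, Equiv.symm_apply_apply] at h
    have hpos : 0 < (a (σ i) : ℝ) * r (σ i) ^ (a (σ i) - 1) * r (σ (σ i)) := by
      rw [h]; exact pow_pos hi _
    rcases (hr (σ i)).eq_or_lt with h0 | h0
    · exfalso
      rw [← h0, zero_pow (by have := ha (σ i); omega)] at hpos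
      simp at hpos
    · exact h0
  have keypos : ∀ m : ℕ, 0 < r ((σ ^ m) j0) := by
    intro m
    induction m with
    | zero => simpa using hj0
    | succ m ih =>
      rw [pow_succ']
      simpa [Equiv.Perm.mul_apply] using step _ ih
  have pos_of_cyc : ∀ k, σ.SameCycle j0 k → 0 < r k := by
    intro k hk
    obtain ⟨m, -, hm⟩ := hk.exists_pow_eq'
    rw [← hm]; exact keypos m
  set O : Finset (Fin n) := Finset.univ.filter (fun k => σ.SameCycle j0 k) with hO
  have hmem : ∀ k, k ∈ O ↔ σ.SameCycle j0 k := by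
    intro k; simp [hO]
  have hOmap : O.map σ.toEmbedding = O := by
    ext k
    rw [Finset.mem_map_equiv, hmem, hmem]
    show σ.SameCycle j0 (σ⁻¹ k) ↔ _
    exact Equiv.Perm.sameCycle_symm_apply_right
  have hOmap' : O.map σ⁻¹.toEmbedding = O := by
    ext k
    rw [Finset.mem_map_equiv, hmem, hmem]
    show σ.SameCycle j0 (σ⁻¹⁻¹ k) ↔ _
    rw [inv_inv]
    exact Equiv.Perm.sameCycle_apply_right
  have reindex : ∀ g : Fin n → ℝ, ∏ k ∈ O, g (σ k) = ∏ k ∈ O, g k := by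
    intro g
    conv_rhs => rw [← hOmap, Finset.prod_map]
    rfl
  have reindex' : ∀ g : Fin n → ℝ, ∏ k ∈ O, g (σ⁻¹ k) = ∏ k ∈ O, g k := by
    intro g
    conv_rhs => rw [← hOmap', Finset.prod_map]
    rfl
  have hprodeq : ∏ k ∈ O, ((a k : ℝ) * r k ^ (a k - 1) * r (σ k))
      = ∏ k ∈ O, r (σ⁻¹ k) ^ a (σ⁻¹ k) :=
    Finset.prod_congr rfl fun k _ => heq k
  rw [Finset.prod_mul_distrib, Finset.prod_mul_distrib, reindex r,
    reindex' (fun k => r k ^ a k)] at hprodeq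
  have hcomb : (∏ k ∈ O, r k ^ (a k - 1)) * ∏ k ∈ O, r k = ∏ k ∈ O, r k ^ a k := by
    rw [← Finset.prod_mul_distrib]
    refine Finset.prod_congr rfl fun k _ => ?_
    rw [← pow_succ]
    congr 1
    have := ha k; omega
  rw [mul_assoc, hcomb] at hprodeq
  have hQ : 0 < ∏ k ∈ O, r k ^ a k := by
    refine Finset.prod_pos fun k hk => pow_pos (pos_of_cyc k ((hmem k).1 hk)) _
  have hA : 1 < ∏ k ∈ O, (a k : ℝ) := by
    have hcard : 0 < O.card :=
      Finset.card_pos.2 ⟨j0, (hmem j0).2 (Equiv.Perm.SameCycle.refl _ _)⟩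
    have h2 : (2 : ℝ) ^ O.card ≤ ∏ k ∈ O, (a k : ℝ) := by
      rw [← Finset.prod_const]
      refine Finset.prod_le_prod (fun k _ => by norm_num) (fun k _ => ?_)
      exact_mod_cast ha k
    have h3 : (1 : ℝ) < 2 ^ O.card := one_lt_pow₀ one_lt_two (by omega)
    linarith
  nlinarith

/-- The real Fréchet derivative of the twisted Pham–Brieskorn polynomial,
computed on single-coordinate directions. -/
lemma tpb_deriv (n : ℕ) (σ : Equiv.Perm (Fin n)) (a : Fin n → ℕ) (z : Fin n → ℂ) :
    ∃ L : (Fin n → ℂ) →L[ℝ] ℂ,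
      HasFDerivAt (fun z : Fin n → ℂ => ∑ i, z i ^ a i * (starRingEnd ℂ) (z (σ i))) L z ∧
      ∀ j c, L (Pi.single j c) =
        (a j : ℂ) * z j ^ (a j - 1) * (starRingEnd ℂ) (z (σ j)) * c
          + z (σ⁻¹ j) ^ a (σ⁻¹ j) * (starRingEnd ℂ) c := by
  classical
  have hterm : ∀ i : Fin n,
      HasFDerivAt (fun z : Fin n → ℂ => z i ^ a i * (starRingEnd ℂ) (z (σ i)))
        ((z i ^ a i) • (Complex.conjCLE.toContinuousLinearMap.comp
            (ContinuousLinearMap.proj (σ i)))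
          + ((starRingEnd ℂ) (z (σ i))) • ((((1 : ℂ →L[ℂ] ℂ).smulRight
              ((a i : ℂ) * z i ^ (a i - 1))).restrictScalars ℝ).comp
            (ContinuousLinearMap.proj i))) z := by
    intro i
    have hp : HasFDerivAt (fun z : Fin n → ℂ => z i ^ a i)
        ((((1 : ℂ →L[ℂ] ℂ).smulRight ((a i : ℂ) * z i ^ (a i - 1))).restrictScalars ℝ).comp
          (ContinuousLinearMap.proj i)) z := by
      have h1 : HasDerivAt (fun w : ℂ => w ^ a i) ((a i : ℂ) * z i ^ (a i - 1)) (z i) :=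
        hasDerivAt_pow (a i) (z i)
      have hproj := (ContinuousLinearMap.proj (R := ℝ) (φ := fun _ : Fin n => ℂ) i).hasFDerivAt
        (x := z)
      exact (h1.hasFDerivAt.restrictScalars ℝ).comp z hproj
    have hc : HasFDerivAt (fun z : Fin n → ℂ => (starRingEnd ℂ) (z (σ i)))
        (Complex.conjCLE.toContinuousLinearMap.comp (ContinuousLinearMap.proj (σ i))) z :=
      by
      have hC := (Complex.conjCLE.toContinuousLinearMap.comp
        (ContinuousLinearMap.proj (R := ℝ) (φ := fun _ : Fin n => ℂ) (σ i))).hasFDerivAt (x := z)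
      exact hC
    exact hp.mul hc
  refine ⟨_, HasFDerivAt.fun_sum (fun i _ => hterm i), ?_⟩
  intro j c
  rw [ContinuousLinearMap.sum_apply]
  simp only [ContinuousLinearMap.add_apply, ContinuousLinearMap.smul_apply,
    ContinuousLinearMap.comp_apply, ContinuousLinearMap.proj_apply,
    ContinuousLinearMap.coe_restrictScalars', ContinuousLinearMap.smulRight_apply,
    ContinuousLinearMap.one_apply, ContinuousLinearEquiv.coe_coe, Complex.conjCLE_apply,
    smul_eq_mul]
  rw [Finset.sum_add_distrib]
  have h1 : ∑ i : Fin n, z i ^ a i * (starRingEnd ℂ) ((Pi.single j c : Fin n → ℂ) (σ i))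
      = z (σ⁻¹ j) ^ a (σ⁻¹ j) * (starRingEnd ℂ) c := by
    rw [Finset.sum_eq_single (σ⁻¹ j)]
    · rw [Equiv.Perm.inv_def, Equiv.apply_symm_apply, Pi.single_eq_same]
    · intro i _ hne
      rw [Pi.single_eq_of_ne (fun h => hne (by rw [← h, Equiv.Perm.inv_def, Equiv.symm_apply_apply]))]
      simp
    · simp
  have h2 : ∑ i : Fin n, (starRingEnd ℂ) (z (σ i)) * ((Pi.single j c : Fin n → ℂ) i * ((a i : ℂ) * z i ^ (a i - 1)))
      = (a j : ℂ) * z j ^ (a j - 1) * (starRingEnd ℂ) (z (σ j)) * c := by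
    rw [Finset.sum_eq_single j]
    · rw [Pi.single_eq_same]; ring
    · intro i _ hne
      rw [Pi.single_eq_of_ne hne]
      simp
    · simp
  rw [h1, h2]; ring

/-- The twisted Pham–Brieskorn polynomial
`f z = ∑ i, (z i)^(a i) · conj (z (σ i))`, with `a i ≥ 2` and `σ` a
permutation of `Fin n`, has an isolated critical point at the origin as a
real analytic map: there is `ε > 0` such that at every `z` with
`0 < ‖z‖ < ε` the real Fréchet derivative of `f` is surjective onto `ℂ`. -/
theorem twistedPhamBrieskorn_isolated_critical_point
    (n : ℕ) (hn : 1 ≤ n) (σ : Equiv.Perm (Fin n))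
    (a : Fin n → ℕ) (ha : ∀ i, 2 ≤ a i) :
    ∃ ε > (0 : ℝ), ∀ z : Fin n → ℂ, 0 < ‖z‖ → ‖z‖ < ε →
      Function.Surjective
        (fderiv ℝ
          (fun z : Fin n → ℂ => ∑ i, z i ^ a i * (starRingEnd ℂ) (z (σ i))) z) := by
  classical
  refine ⟨1, one_pos, ?_⟩
  intro z hz _
  have hz0 : ∃ i, z i ≠ 0 := by
    by_contra h
    push_neg at h
    have : z = 0 := funext fun i => h i
    rw [this] at hz
    simp at hz
  obtain ⟨i0, hi0⟩ := hz0
  have hneq : ∃ j, (a j : ℝ) * ‖z j‖ ^ (a j - 1) * ‖z (σ j)‖ ≠ ‖z (σ⁻¹ j)‖ ^ a (σ⁻¹ j) := by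
    by_contra h
    push_neg at h
    exact tpb_orbit n σ a ha (fun i => ‖z i‖) (fun i => norm_nonneg _) i0
      (norm_pos_iff.2 hi0) h
  obtain ⟨j, hj⟩ := hneq
  obtain ⟨L, hL, hLsingle⟩ := tpb_deriv n σ a z
  rw [hL.fderiv]
  intro u
  have hnorm : ‖(a j : ℂ) * z j ^ (a j - 1) * (starRingEnd ℂ) (z (σ j))‖
      ≠ ‖z (σ⁻¹ j) ^ a (σ⁻¹ j)‖ := by
    have hα : ‖(a j : ℂ) * z j ^ (a j - 1) * (starRingEnd ℂ) (z (σ j))‖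
        = (a j : ℝ) * ‖z j‖ ^ (a j - 1) * ‖z (σ j)‖ := by
      simp [norm_mul, norm_pow]
    have hβ : ‖z (σ⁻¹ j) ^ a (σ⁻¹ j)‖ = ‖z (σ⁻¹ j)‖ ^ a (σ⁻¹ j) := norm_pow _ _
    rw [hα, hβ]
    exact hj
  obtain ⟨c, hc⟩ := tpb_solve _ _ hnorm u
  exact ⟨Pi.single j c, by rw [hLsingle j c, ← hc]⟩
end

section
/- Let n ≥ 1, let σ be a permutation of Fin n, let a : Fin n → ℕ satisfy a i ≥ 2 for every i, and let f(z) = ∑ i, (z i)^(a i) * conj(z (σ i)) be the twisted Pham–Brieskorn polynomial. Then f is polar weighted homogeneous: there exist positive integers d₁, …, d_n, p₁, …, p_n and positive integers d, p such that for every λ ∈ ℂ with ‖λ‖ = 1, every real r > 0, and every z, one has f(fun j => λ^(d_j) * (r:ℂ)^(p_j) * z j) = λ^d * (r:ℝ)^p * f(z). -/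
/-! Since `conj λ = λ⁻¹` for `‖λ‖ = 1`, the monomial `z_i ^ a_i * conj z_{σ i}` has degree
`a_i d_i - d_{σ i}` in `λ` and `a_i p_i + p_{σ i}` in `r`, so one needs positive integer
solutions of `a_i x_i - ε x_{σ i} = const` for `ε = ±1`. Over `ℚ`, the linear map
`x ↦ (a_i x_i - ε x_{σ i})_i` is injective when `a_i > 1 ≥ |ε|` (look at a coordinate of
maximal absolute value), hence surjective; an extremal coordinate argument shows that the
preimage of the constant vector `1` is positive, and clearing denominators gives the weights. -/

section TwistedWeightMap

variable {K ι : Type*} [Field K]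

def twistedWeightMap (a : ι → K) (σ : ι → ι) (ε : K) : (ι → K) →ₗ[K] (ι → K) where
  toFun x i := a i * x i - ε * x (σ i)
  map_add' x y := by ext i; simp only [Pi.add_apply]; ring
  map_smul' c x := by ext i; simp only [Pi.smul_apply, smul_eq_mul, RingHom.id_apply]; ring

variable [LinearOrder K] [IsStrictOrderedRing K] [Finite ι] {a : ι → K} {σ : ι → ι} {ε : K}

lemma twistedWeightMap_injective (ha : ∀ i, 1 < a i) (hε : |ε| ≤ 1) :
    Function.Injective (twistedWeightMap a σ ε) := by
  rw [← LinearMap.ker_eq_bot, LinearMap.ker_eq_bot']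
  intro x hx
  funext i
  have : Nonempty ι := ⟨i⟩
  obtain ⟨k, hk⟩ := Finite.exists_max fun j => |x j|
  have hxk : a k * |x k| ≤ |x k| := by
    have hk0 : a k * x k = ε * x (σ k) := sub_eq_zero.mp (congrFun hx k)
    calc a k * |x k| = |ε| * |x (σ k)| := by
          rw [← abs_of_pos (zero_lt_one.trans (ha k)), ← abs_mul, ← abs_mul, hk0]
      _ ≤ 1 * |x k| := mul_le_mul hε (hk _) (abs_nonneg _) zero_le_one
      _ = |x k| := one_mul _
  have : |x k| = 0 := by nlinarith [ha k, abs_nonneg (x k)]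
  exact abs_nonpos_iff.mp (this ▸ hk i)

lemma exists_mul_sub_mul_eq_one (ha : ∀ i, 1 < a i) (hε : |ε| ≤ 1) :
    ∃ x : ι → K, ∀ i, a i * x i - ε * x (σ i) = 1 := by
  obtain ⟨x, hx⟩ := LinearMap.injective_iff_surjective.mp (twistedWeightMap_injective ha hε) 1
  exact ⟨x, fun i => congrFun hx i⟩

lemma pos_of_mul_sub_eq_one {x : ι → K} (ha : ∀ i, 1 < a i)
    (hx : ∀ i, a i * x i - x (σ i) = 1) (i : ι) : 0 < x i := by
  have : Nonempty ι := ⟨i⟩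
  obtain ⟨k, hk⟩ := Finite.exists_min x
  have : 0 < x k := by nlinarith [hx k, hk (σ k), ha k]
  exact this.trans_le (hk i)

lemma pos_of_mul_add_eq_one {x : ι → K} (ha : ∀ i, 2 ≤ a i)
    (hx : ∀ i, a i * x i + x (σ i) = 1) (i : ι) : 0 < x i := by
  have : Nonempty ι := ⟨i⟩
  obtain ⟨k, hk⟩ := Finite.exists_max fun j => |x j|
  have hle : |x k| ≤ 1 := by
    have : a k * |x k| ≤ 1 + |x k| := by
      calc a k * |x k| = |1 - x (σ k)| := by
            rw [← abs_of_pos (zero_lt_two.trans_le (ha k)), ← abs_mul, ← hx k,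
              add_sub_cancel_right]
        _ ≤ 1 + |x k| := (abs_sub _ _).trans (by rw [abs_one]; linarith [hk (σ k)])
    nlinarith [ha k, abs_nonneg (x k)]
  have hnonneg : ∀ j, 0 ≤ x j := fun j => by
    nlinarith [hx j, ha j, (abs_le.mp ((hk (σ j)).trans hle)).2]
  have hhalf : ∀ j, x j ≤ 1 / 2 := fun j => by nlinarith [hx j, ha j, hnonneg j, hnonneg (σ j)]
  nlinarith [hx i, ha i, hhalf (σ i), hnonneg i]

end TwistedWeightMap

lemma exists_nat_mul_eq_nat_of_pos {ι : Type*} [Fintype ι] (x : ι → ℚ) (hx : ∀ i, 0 < x i) :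
    ∃ N : ℕ, 0 < N ∧ ∃ y : ι → ℕ, (∀ i, 0 < y i) ∧ ∀ i, (y i : ℚ) = N * x i := by
  set N := ∏ j, (x j).den
  have hN : 0 < N := Finset.prod_pos fun j _ => (x j).den_pos
  have hdvd (i : ι) : (x i).den ∣ N := Finset.dvd_prod_of_mem _ (Finset.mem_univ i)
  have hnum (i : ι) : 0 < (x i).num := Rat.num_pos.mpr (hx i)
  refine ⟨N, hN, fun i => N / (x i).den * (x i).num.natAbs, fun i => ?_, fun i => ?_⟩
  · exact Nat.mul_pos (Nat.div_pos (Nat.le_of_dvd hN (hdvd i)) (x i).den_pos)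
      (Int.natAbs_pos.mpr (hnum i).ne')
  · rw [Nat.cast_mul, Nat.cast_div (hdvd i) (Nat.cast_ne_zero.mpr (x i).den_ne_zero),
      Nat.cast_natAbs, Int.cast_abs, abs_of_pos (Int.cast_pos.mpr (hnum i))]
    nth_rw 3 [← Rat.num_div_den (x i)]
    ring

section Weights

variable {ι : Type*} [Fintype ι] (σ : ι → ι) {a : ι → ℕ}

lemma exists_pos_weights_mul_eq_add (ha : ∀ i, 1 < a i) :
    ∃ (w : ι → ℕ) (d : ℕ), (∀ i, 0 < w i) ∧ 0 < d ∧ ∀ i, a i * w i = d + w (σ i) := by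
  have ha' : ∀ i, 1 < (a i : ℚ) := fun i => mod_cast ha i
  obtain ⟨x, hx⟩ := exists_mul_sub_mul_eq_one (σ := σ) ha' (abs_one.le : |(1 : ℚ)| ≤ 1)
  simp only [one_mul] at hx
  obtain ⟨N, hN, w, hw, hwx⟩ := exists_nat_mul_eq_nat_of_pos x (pos_of_mul_sub_eq_one ha' hx)
  refine ⟨w, N, hw, hN, fun i => ?_⟩
  have : (a i : ℚ) * w i = N + w (σ i) := by
    rw [hwx, hwx]
    linear_combination (N : ℚ) * hx i
  exact_mod_cast this

lemma exists_pos_weights_mul_add_eq (ha : ∀ i, 2 ≤ a i) :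
    ∃ (w : ι → ℕ) (p : ℕ), (∀ i, 0 < w i) ∧ 0 < p ∧ ∀ i, a i * w i + w (σ i) = p := by
  have ha' : ∀ i, 2 ≤ (a i : ℚ) := fun i => mod_cast ha i
  obtain ⟨x, hx⟩ := exists_mul_sub_mul_eq_one (σ := σ) (fun i => one_lt_two.trans_le (ha' i))
    (by rw [abs_neg, abs_one] : |(-1 : ℚ)| ≤ 1)
  simp only [neg_one_mul, sub_neg_eq_add] at hx
  obtain ⟨N, hN, w, hw, hwx⟩ := exists_nat_mul_eq_nat_of_pos x (pos_of_mul_add_eq_one ha' hx)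
  refine ⟨w, N, hw, hN, fun i => ?_⟩
  have : (a i : ℚ) * w i + w (σ i) = N := by
    rw [hwx, hwx]
    linear_combination (N : ℚ) * hx i
  exact_mod_cast this

end Weights

lemma polar_action_twisted_monomial {lam : ℂ} (hlam : ‖lam‖ = 1) (r : ℝ) (z w : ℂ)
    {k u u' v v' d p : ℕ} (hu : k * u = d + u') (hv : k * v + v' = p) :
    (lam ^ u * (r : ℂ) ^ v * z) ^ k * starRingEnd ℂ (lam ^ u' * (r : ℂ) ^ v' * w) =
      lam ^ d * ((r ^ p : ℝ) : ℂ) * (z ^ k * starRingEnd ℂ w) := by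
  have hconj : lam * starRingEnd ℂ lam = 1 := by
    rw [Complex.mul_conj, Complex.normSq_eq_norm_sq, hlam, one_pow, Complex.ofReal_one]
  calc (lam ^ u * (r : ℂ) ^ v * z) ^ k * starRingEnd ℂ (lam ^ u' * (r : ℂ) ^ v' * w)
      = lam ^ (k * u) * starRingEnd ℂ lam ^ u' * (r : ℂ) ^ (k * v + v') *
          (z ^ k * starRingEnd ℂ w) := by
        simp only [map_mul, map_pow, Complex.conj_ofReal]
        ring
    _ = lam ^ d * (lam * starRingEnd ℂ lam) ^ u' * (r : ℂ) ^ p * (z ^ k * starRingEnd ℂ w) := by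
        rw [hu, hv]
        ring
    _ = lam ^ d * ((r ^ p : ℝ) : ℂ) * (z ^ k * starRingEnd ℂ w) := by
        rw [hconj, one_pow, mul_one, Complex.ofReal_pow]

theorem twistedPhamBrieskorn_polar_weighted_homogeneous_general
    (n : ℕ) (σ : Equiv.Perm (Fin n))
    (a : Fin n → ℕ) (ha : ∀ i, 2 ≤ a i) :
    ∃ (dw pw : Fin n → ℕ) (d p : ℕ),
      (∀ j, 0 < dw j) ∧ (∀ j, 0 < pw j) ∧ 0 < d ∧ 0 < p ∧
        ∀ (lam : ℂ), ‖lam‖ = 1 → ∀ (r : ℝ), 0 < r → ∀ z : Fin n → ℂ,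
          (fun w : Fin n → ℂ => ∑ i, w i ^ a i * (starRingEnd ℂ) (w (σ i)))
              (fun j => lam ^ dw j * (r : ℂ) ^ pw j * z j) =
            lam ^ d * ((r ^ p : ℝ) : ℂ) *
              (fun w : Fin n → ℂ => ∑ i, w i ^ a i * (starRingEnd ℂ) (w (σ i))) z := by
  obtain ⟨dw, d, hdw, hd, hdw_eq⟩ := exists_pos_weights_mul_eq_add σ ha
  obtain ⟨pw, p, hpw, hp, hpw_eq⟩ := exists_pos_weights_mul_add_eq σ ha
  refine ⟨dw, pw, d, p, hdw, hpw, hd, hp, fun lam hlam r _ z => ?_⟩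
  simp only [Finset.mul_sum]
  exact Finset.sum_congr rfl fun i _ =>
    polar_action_twisted_monomial hlam r (z i) (z (σ i)) (hdw_eq i) (hpw_eq i)

/-- The twisted Pham–Brieskorn polynomial
`f z = ∑ i, (z i)^(a i) · conj (z (σ i))` is polar weighted homogeneous:
there are positive integer weights `dw j`, `pw j` and positive integers
`d`, `p` such that for every unit complex number `λ`, every real `r > 0`
and every `z`, `f ((λ, r) · z) = λ^d · r^p · f z`, where
`(λ, r) · z = fun j => λ^(dw j) * r^(pw j) * z j`. -/
theorem twistedPhamBrieskorn_polar_weighted_homogeneous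
    (n : ℕ) (hn : 1 ≤ n) (σ : Equiv.Perm (Fin n))
    (a : Fin n → ℕ) (ha : ∀ i, 2 ≤ a i) :
    ∃ (dw pw : Fin n → ℕ) (d p : ℕ),
      (∀ j, 0 < dw j) ∧ (∀ j, 0 < pw j) ∧ 0 < d ∧ 0 < p ∧
        ∀ (lam : ℂ), ‖lam‖ = 1 → ∀ (r : ℝ), 0 < r → ∀ z : Fin n → ℂ,
          (fun w : Fin n → ℂ => ∑ i, w i ^ a i * (starRingEnd ℂ) (w (σ i)))
              (fun j => lam ^ dw j * (r : ℂ) ^ pw j * z j) =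
            lam ^ d * ((r ^ p : ℝ) : ℂ) *
              (fun w : Fin n → ℂ => ∑ i, w i ^ a i * (starRingEnd ℂ) (w (σ i))) z :=
  twistedPhamBrieskorn_polar_weighted_homogeneous_general n σ a ha
end

section
/- Let n ≥ 2 and let λ : Fin n → ℂ satisfy the hyperbolicity hypothesis: for all i ≠ j, the pair (λ i, λ j) is linearly independent over ℝ. Define g : EuclideanSpace ℂ (Fin n) → ℂ by g(z) = ∑ i, λ i * ‖z i‖². Then the zero set V = g⁻¹(0) has an isolated singularity at the origin: for every z ∈ V with z ≠ 0, the real Fréchet derivative fderiv ℝ g z is a surjective real-linear map onto ℂ. Consequently V ∖ {0} is a smooth real submanifold of ℂⁿ of real codimension 2, cut out by the two real equations Re g = 0 and Im g = 0. -/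
/-! The real derivative of `g z = ∑ λᵢ ‖zᵢ‖²` at `z` sends `v` to `∑ λᵢ · 2 Re ⟨zᵢ, vᵢ⟩`, so moving
only the `i`-th coordinate along `zᵢ` produces every real multiple of `λᵢ` as soon as `zᵢ ≠ 0`.
A point `z ≠ 0` of `V` has two nonzero coordinates `zᵢ, zⱼ`, for otherwise `g z = λᵢ ‖zᵢ‖² ≠ 0`;
by hyperbolicity `λᵢ, λⱼ` is then a real basis of `ℂ` lying in the range of the derivative. -/
open scoped RealInnerProductSpace

theorem LinearMap.surjective_of_linearIndependent_pair_mem_range {K V W : Type*} [Field K]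
    [AddCommGroup V] [Module K V] [AddCommGroup W] [Module K W] (hW : Module.finrank K W = 2)
    (f : V →ₗ[K] W) {a b : W} (hab : LinearIndependent K ![a, b])
    (ha : a ∈ Set.range f) (hb : b ∈ Set.range f) : Function.Surjective f := by
  have hspan : Submodule.span K (Set.range ![a, b]) = ⊤ :=
    hab.span_eq_top_of_card_eq_finrank (by simp [hW])
  rw [← LinearMap.range_eq_top, eq_top_iff, ← hspan, Submodule.span_le, Matrix.range_cons,
    Matrix.range_cons, Matrix.range_empty, Set.union_empty, Set.singleton_union,
    Set.insert_subset_iff, Set.singleton_subset_iff]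
  exact ⟨ha, hb⟩

section WeightedNormSq

variable {ι : Type*} [Fintype ι] (lam : ι → ℂ)

noncomputable def weightedNormSq (z : EuclideanSpace ℂ ι) : ℂ :=
  ∑ i, lam i * ((‖z i‖ ^ 2 : ℝ) : ℂ)

theorem hasFDerivAt_weightedNormSq (z : EuclideanSpace ℂ ι) :
    HasFDerivAt (weightedNormSq lam)
      (∑ i, lam i • Complex.ofRealCLM.comp
        ((2 : ℕ) • (innerSL ℝ (z i)).comp ((EuclideanSpace.proj i).restrictScalars ℝ))) z := by
  refine HasFDerivAt.fun_sum fun i _ => ?_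
  have hproj := ((EuclideanSpace.proj (𝕜 := ℂ) i).restrictScalars ℝ).hasFDerivAt (x := z)
  exact (Complex.ofRealCLM.hasFDerivAt.comp z hproj.norm_sq).const_mul (lam i)

theorem fderiv_weightedNormSq_apply (z v : EuclideanSpace ℂ ι) :
    fderiv ℝ (weightedNormSq lam) z v = ∑ i, lam i * ((2 * ⟪z i, v i⟫ : ℝ) : ℂ) := by
  rw [(hasFDerivAt_weightedNormSq lam z).fderiv, _root_.sum_apply]
  refine Finset.sum_congr rfl fun i _ => ?_
  simp only [_root_.smul_apply, ContinuousLinearMap.comp_apply,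
    ContinuousLinearMap.coe_restrictScalars', innerSL_apply_apply, Complex.ofRealCLM_apply,
    smul_eq_mul, nsmul_eq_mul, Nat.cast_ofNat, PiLp.proj_apply]

theorem fderiv_weightedNormSq_single [DecidableEq ι] (z : EuclideanSpace ℂ ι) (i : ι) :
    fderiv ℝ (weightedNormSq lam) z (EuclideanSpace.single i (z i)) =
      (2 * ‖z i‖ ^ 2 : ℝ) • lam i := by
  rw [fderiv_weightedNormSq_apply, Finset.sum_eq_single i (fun k _ hk => by simp [hk]) (by simp)]
  simp [Complex.real_smul, mul_comm]

theorem mem_range_fderiv_weightedNormSq {z : EuclideanSpace ℂ ι} {i : ι} (hi : z i ≠ 0) :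
    lam i ∈ Set.range (fderiv ℝ (weightedNormSq lam) z) := by
  classical
  have hc : (2 * ‖z i‖ ^ 2 : ℝ) ≠ 0 := by positivity
  refine ⟨(2 * ‖z i‖ ^ 2 : ℝ)⁻¹ • EuclideanSpace.single i (z i), ?_⟩
  rw [map_smul, fderiv_weightedNormSq_single, inv_smul_smul₀ hc]

theorem exists_ne_ne_zero_of_weightedNormSq_eq_zero (hlam : ∀ i, lam i ≠ 0)
    {z : EuclideanSpace ℂ ι} (hz : weightedNormSq lam z = 0) (hz0 : z ≠ 0) :
    ∃ i j, i ≠ j ∧ z i ≠ 0 ∧ z j ≠ 0 := by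
  obtain ⟨i, hi⟩ : ∃ i, z i ≠ 0 := by
    by_contra! h
    exact hz0 (PiLp.ext h)
  refine ⟨i, ?_⟩
  by_contra! h
  have hsingle : weightedNormSq lam z = lam i * ((‖z i‖ ^ 2 : ℝ) : ℂ) :=
    Finset.sum_eq_single i (fun k _ hk => by simp [h k (Ne.symm hk) hi]) (by simp)
  rw [hz, eq_comm] at hsingle
  simp [hlam i, hi] at hsingle

end WeightedNormSq

/-- Let `λ : Fin n → ℂ` (`n ≥ 2`) satisfy the
hyperbolicity hypothesis: for `i ≠ j` the pair `(λ i, λ j)` is linearly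
independent over `ℝ`. Then the zero set of
`g z = ∑ i, λ i * ‖z i‖²` has an isolated singularity at the origin: at
every `z ≠ 0` with `g z = 0`, the real Fréchet derivative of `g` is
surjective onto `ℂ` (so `V ∖ {0}` is a smooth codimension-2 real
submanifold, cut out by `Re g = 0` and `Im g = 0`). -/
theorem siegel_quadrics_isolated_singularity
    (n : ℕ) (hn : 2 ≤ n) (lam : Fin n → ℂ)
    (hyp : ∀ i j : Fin n, i ≠ j → LinearIndependent ℝ ![lam i, lam j]) :
    ∀ z : EuclideanSpace ℂ (Fin n),
      (∑ i, lam i * ((‖z i‖ ^ 2 : ℝ) : ℂ)) = 0 → z ≠ 0 →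
        Function.Surjective
          (fderiv ℝ
            (fun z : EuclideanSpace ℂ (Fin n) =>
              ∑ i, lam i * ((‖z i‖ ^ 2 : ℝ) : ℂ)) z) := by
  intro z hz hz0
  have : Nontrivial (Fin n) := Fin.nontrivial_iff_two_le.mpr hn
  have hlam (i : Fin n) : lam i ≠ 0 := by
    obtain ⟨j, hj⟩ := exists_ne i
    simpa using (hyp i j hj.symm).ne_zero 0
  obtain ⟨i, j, hij, hi, hj⟩ := exists_ne_ne_zero_of_weightedNormSq_eq_zero lam hlam hz hz0
  exact LinearMap.surjective_of_linearIndependent_pair_mem_range Complex.finrank_real_complex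
    _ (hyp i j hij) (mem_range_fderiv_weightedNormSq lam hi) (mem_range_fderiv_weightedNormSq lam hj)
end

section
/- Let n ≥ 2 and let a, b : Fin n → ℝ be such that for all i ≠ j the vectors (a i, b i) and (a j, b j) in ℝ² are linearly independent over ℝ. Define F : (Fin n → ℝ) → ℝ × ℝ by F(x) = (∑ i, a i * (x i)², ∑ i, b i * (x i)²). Then: (a) the critical set of F is exactly the union of the coordinate axes: fderiv ℝ F x fails to be surjective if and only if at most one coordinate of x is nonzero; and (b) the set of critical values of F is the union over i of the closed half-lines {t • (a i, b i) : t ≥ 0} in ℝ². -/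
/-!
The differential of `x ↦ ∑ i, x i ^ 2 • l i` at `x` sends `v` to `∑ i, 2 x i v i • l i`, so
its image is the span of the `l i` with `x i ≠ 0`. In the plane, pairwise independence of the
`l i` makes this span everything as soon as two coordinates are nonzero, while one vector never
spans. Hence the critical points are the points of the coordinate axes, and the critical values
are the values `t ^ 2 • l i` taken there: the closed half-lines spanned by the `l i`.
-/

open Module Submodule

theorem Submodule.span_image_eq_top_iff_nontrivial {K V ι : Type*} [Field K]
    [AddCommGroup V] [Module K V] (hV : finrank K V = 2) {l : ι → V}
    (hl : ∀ i j, i ≠ j → LinearIndependent K ![l i, l j]) {s : Set ι} :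
    span K (l '' s) = ⊤ ↔ s.Nontrivial := by
  constructor
  · intro htop
    rw [← Set.not_subsingleton_iff]
    intro hs
    have hle : finrank K (span K (l '' s)) ≤ 1 := by
      obtain rfl | ⟨i, rfl⟩ := hs.eq_empty_or_singleton
      · rw [Set.image_empty, span_empty, finrank_bot]
        exact zero_le_one
      · rw [Set.image_singleton]
        simpa using finrank_span_le_card (R := K) {l i}
    rw [htop, finrank_top] at hle
    omega
  · rintro ⟨j, hj, k, hk, hjk⟩
    refine top_unique ?_
    rw [← (hl j k hjk).span_eq_top_of_card_eq_finrank (by simp [hV])]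
    refine span_mono ?_
    rintro _ ⟨m, rfl⟩
    fin_cases m
    · exact Set.mem_image_of_mem l hj
    · exact Set.mem_image_of_mem l hk

theorem Pi.exists_eq_single_of_subsingleton_support {ι M : Type*} [DecidableEq ι]
    [Nonempty ι] [Zero M] {x : ι → M} (hx : (Function.support x).Subsingleton) :
    ∃ i, x = Pi.single i (x i) := by
  by_cases h : ∃ i, x i ≠ 0
  · obtain ⟨i, hi⟩ := h
    refine ⟨i, funext fun j => ?_⟩
    by_cases hji : j = i
    · subst hji
      simp
    · rw [Pi.single_eq_of_ne hji]
      by_contra hj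
      exact hji (hx hj hi)
  · push Not at h
    exact ⟨Classical.arbitrary ι, funext fun j => by simp [h]⟩

section SumSqSMul

variable {ι E : Type*} [Fintype ι] [NormedAddCommGroup E] [NormedSpace ℝ E] (l : ι → E)

theorem hasFDerivAt_sum_sq_smul (x : ι → ℝ) :
    HasFDerivAt (fun y : ι → ℝ => ∑ i, y i ^ 2 • l i)
      (∑ i, (2 * x i) •
        (ContinuousLinearMap.proj (R := ℝ) (φ := fun _ : ι => ℝ) i).smulRight (l i)) x := by
  refine HasFDerivAt.fun_sum fun i _ => ?_
  convert ((hasFDerivAt_apply (𝕜 := ℝ) (F' := fun _ : ι => ℝ) i x).pow 2).smul_const (l i)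
    using 1
  ext v
  simp [smul_smul]

theorem fderiv_sum_sq_smul_apply (x v : ι → ℝ) :
    fderiv ℝ (fun y : ι → ℝ => ∑ i, y i ^ 2 • l i) x v = ∑ i, (2 * x i * v i) • l i := by
  simp [(hasFDerivAt_sum_sq_smul l x).fderiv, smul_smul]

theorem range_fderiv_sum_sq_smul (x : ι → ℝ) :
    LinearMap.range (fderiv ℝ (fun y : ι → ℝ => ∑ i, y i ^ 2 • l i) x : (ι → ℝ) →ₗ[ℝ] E) =
      span ℝ (l '' Function.support x) := by
  classical
  apply le_antisymm
  · rintro _ ⟨v, rfl⟩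
    rw [ContinuousLinearMap.coe_coe, fderiv_sum_sq_smul_apply]
    refine sum_mem fun i _ => ?_
    by_cases hi : x i = 0
    · simp [hi]
    · exact smul_mem _ _ (subset_span ⟨i, hi, rfl⟩)
  · rw [span_le]
    rintro _ ⟨j, hj : x j ≠ 0, rfl⟩
    refine ⟨Pi.single j (2 * x j)⁻¹, ?_⟩
    rw [ContinuousLinearMap.coe_coe, fderiv_sum_sq_smul_apply,
      Finset.sum_eq_single j (fun i _ hi => by simp [hi]) (by simp), Pi.single_eq_same,
      mul_inv_cancel₀ (mul_ne_zero two_ne_zero hj), one_smul]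

theorem surjective_fderiv_sum_sq_smul_iff (hE : finrank ℝ E = 2)
    (hl : ∀ i j, i ≠ j → LinearIndependent ℝ ![l i, l j]) (x : ι → ℝ) :
    Function.Surjective (fderiv ℝ (fun y : ι → ℝ => ∑ i, y i ^ 2 • l i) x) ↔
      (Function.support x).Nontrivial := by
  rw [← span_image_eq_top_iff_nontrivial hE hl, ← range_fderiv_sum_sq_smul,
    LinearMap.range_eq_top]
  rfl

theorem sum_sq_smul_single [DecidableEq ι] (i : ι) (s : ℝ) :
    ∑ j, (Pi.single i s : ι → ℝ) j ^ 2 • l j = s ^ 2 • l i := by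
  rw [Finset.sum_eq_single i (fun j _ hj => by simp [Pi.single_eq_of_ne hj]) (by simp)]
  simp

theorem image_sum_sq_smul_of_subsingleton_support [Nonempty ι] :
    {v | ∃ x : ι → ℝ, (Function.support x).Subsingleton ∧ ∑ i, x i ^ 2 • l i = v} =
      ⋃ i, (fun t : ℝ => t • l i) '' Set.Ici 0 := by
  classical
  ext v
  simp only [Set.mem_ofPred_eq, Set.mem_iUnion, Set.mem_image, Set.mem_Ici]
  constructor
  · rintro ⟨x, hx, rfl⟩
    obtain ⟨i, hi⟩ := Pi.exists_eq_single_of_subsingleton_support hx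
    refine ⟨i, x i ^ 2, sq_nonneg _, ?_⟩
    rw [hi, sum_sq_smul_single, Pi.single_eq_same]
  · rintro ⟨i, t, ht, rfl⟩
    refine ⟨Pi.single i (Real.sqrt t), (Set.subsingleton_singleton).anti Pi.support_single_subset,
      ?_⟩
    rw [sum_sq_smul_single, Real.sq_sqrt ht]

end SumSqSMul

/-- **López de Medrano's quadrics.** Let `n ≥ 2` and let
`a b : Fin n → ℝ` be such that for `i ≠ j` the vectors `(a i, b i)` and
`(a j, b j)` of `ℝ²` are linearly independent. For
`F x = (∑ i, a i * x i², ∑ i, b i * x i²)`: (a) the critical set of `F` is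
exactly the union of the coordinate axes, i.e. `fderiv ℝ F x` fails to be
surjective iff at most one coordinate of `x` is nonzero; and (b) the set of
critical values of `F` is the union over `i` of the closed half-lines
`{t • (a i, b i) : t ≥ 0}`. -/
theorem lopezDeMedrano_critical_set_and_discriminant
    (n : ℕ) (hn : 2 ≤ n) (a b : Fin n → ℝ)
    (hyp : ∀ i j : Fin n, i ≠ j →
      LinearIndependent ℝ ![((a i, b i) : ℝ × ℝ), ((a j, b j) : ℝ × ℝ)])
    (F : (Fin n → ℝ) → ℝ × ℝ)
    (hF : ∀ x, F x = (∑ i, a i * x i ^ 2, ∑ i, b i * x i ^ 2)) :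
    (∀ x : Fin n → ℝ,
        ¬ Function.Surjective (fderiv ℝ F x) ↔
          ∀ j k : Fin n, x j ≠ 0 → x k ≠ 0 → j = k) ∧
      {v : ℝ × ℝ | ∃ x : Fin n → ℝ,
          ¬ Function.Surjective (fderiv ℝ F x) ∧ F x = v} =
        ⋃ i : Fin n, (fun t : ℝ => t • ((a i, b i) : ℝ × ℝ)) '' Set.Ici 0 := by
  obtain rfl : F = fun x => ∑ i, x i ^ 2 • ((a i, b i) : ℝ × ℝ) :=
    funext fun x => by ext <;> simp [hF, Prod.fst_sum, Prod.snd_sum, mul_comm]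
  have : Nonempty (Fin n) := ⟨⟨0, by omega⟩⟩
  have hcrit (x : Fin n → ℝ) :
      ¬ Function.Surjective (fderiv ℝ (fun y : Fin n → ℝ => ∑ i, y i ^ 2 • (a i, b i)) x) ↔
        (Function.support x).Subsingleton := by
    rw [surjective_fderiv_sum_sq_smul_iff _ (by simp) hyp, Set.not_nontrivial_iff]
  refine ⟨fun x => (hcrit x).trans
    ⟨fun h j k hj hk => h hj hk, fun h j hj k hk => h j k hj hk⟩, ?_⟩
  simp_rw [hcrit]
  exact image_sum_sq_smul_of_subsingleton_support _
end

section
/- Let n ≥ 2 and let a : Fin n → ℕ satisfy a i ≥ 2 for every i. Define the mixed function h : (Fin n → ℂ) → ℂ by h(z) = (∑ i, (z i)^(a i)) * conj(∏ i, z i). Then h has an isolated critical value at 0 ∈ ℂ — i.e. there exist ε > 0 and δ > 0 such that for every z with ‖z‖ ≤ ε at which the real Fréchet derivative fderiv ℝ h z is not surjective onto ℂ, if ‖h(z)‖ ≤ δ then h(z) = 0 — if and only if ∑ i, 1/(a i) ≠ 1 (the sum over i of the rationals 1/a_i is different from 1). -/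
open Finset ComplexConjugate

noncomputable def Lmap (n : ℕ) (a : Fin n → ℕ) (z : Fin n → ℂ) : (Fin n → ℂ) →L[ℝ] ℂ :=
  (∑ i, z i ^ a i) • ((Complex.conjCLE.toContinuousLinearMap).comp
      ((∑ i, (∏ j ∈ Finset.univ.erase i, z j) •
        (ContinuousLinearMap.proj i : (Fin n → ℂ) →L[ℂ] ℂ)).restrictScalars ℝ))
  + ((starRingEnd ℂ) (∏ i, z i)) •
      ((∑ i, ((a i : ℂ) * z i ^ (a i - 1)) •
        (ContinuousLinearMap.proj i : (Fin n → ℂ) →L[ℂ] ℂ)).restrictScalars ℝ)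

lemma Lmap_apply (n : ℕ) (a : Fin n → ℕ) (z w : Fin n → ℂ) :
    Lmap n a z w = (∑ i, z i ^ a i) *
        (starRingEnd ℂ) (∑ i, (∏ j ∈ Finset.univ.erase i, z j) * w i)
      + (starRingEnd ℂ) (∏ i, z i) * (∑ i, ((a i : ℂ) * z i ^ (a i - 1)) * w i) := by
  simp [Lmap, smul_eq_mul, mul_comm]

lemma hasF (n : ℕ) (a : Fin n → ℕ) (z : Fin n → ℂ) :
    HasFDerivAt (fun z : Fin n → ℂ => (∑ i, z i ^ a i) * (starRingEnd ℂ) (∏ i, z i))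
      (Lmap n a z) z := by
  have hf : HasFDerivAt (fun z : Fin n → ℂ => ∑ i, z i ^ a i)
      (∑ i, ((a i : ℂ) * z i ^ (a i - 1)) •
        (ContinuousLinearMap.proj i : (Fin n → ℂ) →L[ℂ] ℂ)) z := by
    refine HasFDerivAt.fun_sum fun i _ => ?_
    exact (hasDerivAt_pow (a i) (z i)).comp_hasFDerivAt z
      (hasFDerivAt_apply i z)
  have hg : HasFDerivAt (fun z : Fin n → ℂ => ∏ i, z i)
      (∑ i, (∏ j ∈ Finset.univ.erase i, z j) •
        (ContinuousLinearMap.proj i : (Fin n → ℂ) →L[ℂ] ℂ)) z := by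
    refine HasFDerivAt.finset_prod fun i _ => (hasFDerivAt_apply i z)
  have hcg : HasFDerivAt (fun z : Fin n → ℂ => (starRingEnd ℂ) (∏ i, z i))
      ((Complex.conjCLE.toContinuousLinearMap).comp
        ((∑ i, (∏ j ∈ Finset.univ.erase i, z j) •
          (ContinuousLinearMap.proj i : (Fin n → ℂ) →L[ℂ] ℂ)).restrictScalars ℝ)) z :=
    (Complex.conjCLE.toContinuousLinearMap.hasFDerivAt).comp z (hg.restrictScalars ℝ)
  exact (hf.restrictScalars ℝ).mul hcg

lemma surj_of_indep {E : Type*} [NormedAddCommGroup E] [NormedSpace ℝ E]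
    (T : E →L[ℝ] ℂ) (w₁ w₂ : E)
    (hd : ((starRingEnd ℂ) (T w₁) * T w₂).im ≠ 0) : Function.Surjective T := by
  intro u
  set p := T w₁ with hp
  set q := T w₂ with hq
  have hd' : p.re * q.im - p.im * q.re ≠ 0 := by
    have : ((starRingEnd ℂ) p * q).im = p.re * q.im - p.im * q.re := by
      simp [Complex.mul_im]; ring
    rwa [this] at hd
  refine ⟨((u.re * q.im - u.im * q.re) / (p.re * q.im - p.im * q.re)) • w₁
    + ((p.re * u.im - p.im * u.re) / (p.re * q.im - p.im * q.re)) • w₂, ?_⟩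
  rw [map_add, map_smul, map_smul, ← hp, ← hq]
  have hd'' : q.im * p.re - q.re * p.im ≠ 0 := by rw [mul_comm q.im, mul_comm q.re]; exact hd'
  apply Complex.ext <;>
    simp only [Complex.add_re, Complex.add_im, Complex.smul_re, Complex.smul_im,
      smul_eq_mul] <;>
    field_simp <;> ring

lemma no_crit (n : ℕ) (hn : 2 ≤ n) (a : Fin n → ℕ) (ha : ∀ i, 2 ≤ a i)
    (z : Fin n → ℂ) (hns : ¬ Function.Surjective (Lmap n a z))
    (hz0 : (∑ i, z i ^ a i) * (starRingEnd ℂ) (∏ i, z i) ≠ 0) :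
    (∑ i, (1 : ℚ) / (a i : ℚ)) = 1 := by
  set f := ∑ i, z i ^ a i with hfdef
  set g := ∏ i, z i with hgdef
  obtain ⟨hf, hgc'⟩ := mul_ne_zero_iff.1 hz0
  have hg : g ≠ 0 := by simpa using hgc'
  have hzi : ∀ i, z i ≠ 0 := fun i hi => hg (Finset.prod_eq_zero (mem_univ i) hi)
  have hai : ∀ i, (a i : ℂ) ≠ 0 := fun i =>
    Nat.cast_ne_zero.mpr (by have := ha i; omega)
  set T := Lmap n a z with hT
  have hpar : ∀ w w' : Fin n → ℂ, ((starRingEnd ℂ) (T w) * T w').im = 0 := by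
    intro w w'
    by_contra hd
    exact hns (surj_of_indep T w w' hd)
  set A : Fin n → ℂ := fun i => (starRingEnd ℂ) g * ((a i : ℂ) * z i ^ (a i - 1)) with hA
  set B : Fin n → ℂ := fun i => (starRingEnd ℂ) f * ∏ j ∈ Finset.univ.erase i, z j with hB
  have hTe : ∀ i, T (Pi.single i 1) = A i + (starRingEnd ℂ) (B i) := by
    intro i
    rw [hT, Lmap_apply]
    simp only [Pi.single_apply, mul_ite, mul_one, mul_zero, Finset.sum_ite_eq',
      mem_univ, if_true]
    simp only [hA, hB, map_mul, Complex.conj_conj]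
    ring
  have hTIe : ∀ i, T (Pi.single i Complex.I) =
      (A i - (starRingEnd ℂ) (B i)) * Complex.I := by
    intro i
    rw [hT, Lmap_apply]
    simp only [Pi.single_apply, mul_ite, mul_zero, Finset.sum_ite_eq',
      mem_univ, if_true]
    simp only [hA, hB, map_mul, Complex.conj_conj, Complex.conj_I]
    ring
  have hBne : ∀ i, B i ≠ 0 := by
    intro i
    simp only [hB]
    exact mul_ne_zero (by simpa using hf) (Finset.prod_ne_zero_iff.2 fun j _ => hzi j)
  have hi0 : (0 : ℕ) < n := by omega
  set i0 : Fin n := ⟨0, hi0⟩ with hi0def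
  have hanchor : T (Pi.single i0 1) ≠ 0 ∨ T (Pi.single i0 Complex.I) ≠ 0 := by
    by_contra hc
    push_neg at hc
    obtain ⟨h1, h2⟩ := hc
    rw [hTe] at h1
    rw [hTIe] at h2
    have h2' : A i0 - (starRingEnd ℂ) (B i0) = 0 := by
      have := mul_eq_zero.1 h2
      simpa [Complex.I_ne_zero] using this
    have : (starRingEnd ℂ) (B i0) = 0 := by linear_combination (h1 - h2') / 2
    exact hBne i0 (by simpa using this)
  obtain ⟨w0, hw0ne⟩ : ∃ w0, T w0 ≠ 0 := by
    rcases hanchor with h | h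
    · exact ⟨_, h⟩
    · exact ⟨_, h⟩
  set v := T w0 with hv
  have hvne : v ≠ 0 := hw0ne
  have hv1 : ∀ i, ((starRingEnd ℂ) v * (A i + (starRingEnd ℂ) (B i))).im = 0 := by
    intro i; have := hpar w0 (Pi.single i 1); rwa [hTe] at this
  have hv2 : ∀ i, ((starRingEnd ℂ) v * ((A i - (starRingEnd ℂ) (B i)) * Complex.I)).im = 0 := by
    intro i; have := hpar w0 (Pi.single i Complex.I); rwa [hTIe] at this
  have hrel : ∀ i, (starRingEnd ℂ) v * A i = v * B i := by
    intro i
    have h1 : ((starRingEnd ℂ) v * A i + (starRingEnd ℂ) v * (starRingEnd ℂ) (B i)).im = 0 := by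
      rw [← mul_add]; exact hv1 i
    have h2 : ((starRingEnd ℂ) v * A i - (starRingEnd ℂ) v * (starRingEnd ℂ) (B i)).re = 0 := by
      have h := hv2 i
      rw [show (starRingEnd ℂ) v * ((A i - (starRingEnd ℂ) (B i)) * Complex.I)
          = ((starRingEnd ℂ) v * A i - (starRingEnd ℂ) v * (starRingEnd ℂ) (B i)) * Complex.I
          from by ring] at h
      simpa [Complex.mul_im, Complex.I_re, Complex.I_im] using h
    have hxy : (starRingEnd ℂ) v * A i
        = (starRingEnd ℂ) ((starRingEnd ℂ) v * (starRingEnd ℂ) (B i)) := by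
      apply Complex.ext
      · simp only [Complex.sub_re] at h2
        simp only [Complex.conj_re]
        linarith
      · simp only [Complex.add_im] at h1
        simp only [Complex.conj_im]
        linarith
    rw [hxy]
    simp [map_mul]
  have key : ∀ i, (starRingEnd ℂ) v * (starRingEnd ℂ) g * ((a i : ℂ) * z i ^ a i)
      = v * ((starRingEnd ℂ) f * g) := by
    intro i
    have h1 := hrel i
    simp only [hA, hB] at h1
    have hpow : z i ^ (a i - 1) * z i = z i ^ a i := by
      rw [← pow_succ]
      congr 1
      have := ha i
      omega
    have hprod : (∏ j ∈ Finset.univ.erase i, z j) * z i = g := by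
      rw [hgdef]
      exact Finset.prod_erase_mul _ _ (mem_univ i)
    rw [← hpow]
    linear_combination (z i) * h1 + v * (starRingEnd ℂ) f * hprod
  have hvc : (starRingEnd ℂ) v ≠ 0 := by simpa using hvne
  have hgc : (starRingEnd ℂ) g ≠ 0 := by simpa using hg
  set W : ℂ := v * ((starRingEnd ℂ) f * g) with hW
  set D : ℂ := (starRingEnd ℂ) v * (starRingEnd ℂ) g with hD
  have hDne : D ≠ 0 := mul_ne_zero hvc hgc
  have hzia : ∀ i, z i ^ a i = (W / D) * (a i : ℂ)⁻¹ := by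
    intro i
    rw [div_mul_eq_mul_div, eq_div_iff hDne, eq_mul_inv_iff_mul_eq₀ (hai i)]
    linear_combination key i
  have hfE : f = (W / D) * ∑ i, ((a i : ℂ))⁻¹ := by
    rw [hfdef, Finset.mul_sum]
    exact Finset.sum_congr rfl fun i _ => hzia i
  have hnW : ‖W‖ = ‖v‖ * ‖f‖ * ‖g‖ := by
    rw [hW, norm_mul, norm_mul, RCLike.norm_conj]
    ring
  have hnD : ‖D‖ = ‖v‖ * ‖g‖ := by
    rw [hD, norm_mul, RCLike.norm_conj, RCLike.norm_conj]
  have hnE : ‖W / D‖ = ‖f‖ := by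
    rw [norm_div, hnW, hnD, div_eq_iff (mul_ne_zero (norm_ne_zero_iff.2 hvne)
      (norm_ne_zero_iff.2 hg))]
    ring
  set S : ℝ := ∑ i, ((a i : ℝ))⁻¹ with hS
  have hSc : (∑ i, ((a i : ℂ))⁻¹) = (S : ℂ) := by
    rw [hS]; push_cast; rfl
  have hSnn : 0 ≤ S := by
    rw [hS]; positivity
  have hnorm : ‖f‖ = ‖f‖ * S := by
    conv_lhs => rw [hfE]
    rw [norm_mul, hSc, hnE, Complex.norm_real, Real.norm_eq_abs, abs_of_nonneg hSnn]
  have hfn : ‖f‖ ≠ 0 := norm_ne_zero_iff.2 hf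
  have hS1 : S = 1 := by
    have h' : ‖f‖ * 1 = ‖f‖ * S := by linarith
    exact (mul_left_cancel₀ hfn h').symm
  have hq : ((∑ i, (1 : ℚ) / (a i : ℚ) : ℚ) : ℝ) = S := by
    rw [hS]
    push_cast
    simp [one_div]
  exact_mod_cast hq.trans hS1

lemma exists_crit (n : ℕ) (hn : 2 ≤ n) (a : Fin n → ℕ) (ha : ∀ i, 2 ≤ a i)
    (hsum : (∑ i, (1 : ℚ) / (a i : ℚ)) = 1) (ε δ : ℝ) (hε : 0 < ε) (hδ : 0 < δ) :
    ∃ z : Fin n → ℂ, ‖z‖ ≤ ε ∧ ¬ Function.Surjective (Lmap n a z) ∧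
      ‖(∑ i, z i ^ a i) * (starRingEnd ℂ) (∏ i, z i)‖ ≤ δ ∧
      (∑ i, z i ^ a i) * (starRingEnd ℂ) (∏ i, z i) ≠ 0 := by
  have hSR : (∑ i, ((a i : ℝ))⁻¹) = 1 := by
    have h' : ((∑ i, (1 : ℚ) / (a i : ℚ) : ℚ) : ℝ) = 1 := by exact_mod_cast hsum
    rw [← h']
    push_cast
    simp [one_div]
  have hapos : ∀ i, (0 : ℝ) < a i := fun i => by
    have := ha i
    exact_mod_cast Nat.cast_pos.mpr (by omega)
  have ha1 : ∀ i, (1 : ℝ) ≤ a i := fun i => by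
    have := ha i
    exact_mod_cast Nat.one_le_cast.mpr (by omega)
  set m : ℝ := min 1 (min ε δ) with hmdef
  have hm : 0 < m := lt_min one_pos (lt_min hε hδ)
  have hm1 : m ≤ 1 := min_le_left _ _
  have hmε : m ≤ ε := le_trans (min_le_right _ _) (min_le_left _ _)
  have hmδ : m ≤ δ := le_trans (min_le_right _ _) (min_le_right _ _)
  set A : ℕ := 2 + Finset.univ.sup a with hAdef
  have hAa : ∀ i, a i ≤ A := fun i =>
    le_trans (Finset.le_sup (mem_univ i)) (by omega)
  have hA1 : 1 ≤ A := by omega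
  set t : ℝ := m ^ A with htdef
  have ht : 0 < t := pow_pos hm A
  have htm : t ≤ m := by
    calc m ^ A ≤ m ^ 1 := pow_le_pow_of_le_one hm.le hm1 hA1
    _ = m := pow_one m
  have ht1 : t ≤ 1 := le_trans htm hm1
  set r : Fin n → ℝ := fun i => (t / a i) ^ ((a i : ℝ))⁻¹ with hrdef
  have hr : ∀ i, 0 < r i := fun i =>
    Real.rpow_pos_of_pos (div_pos ht (hapos i)) _
  have hrpow : ∀ i, r i ^ (a i) = t / a i := by
    intro i
    rw [hrdef]
    rw [← Real.rpow_natCast ((t / a i) ^ ((a i : ℝ))⁻¹) (a i),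
      ← Real.rpow_mul (le_of_lt (div_pos ht (hapos i))),
      inv_mul_cancel₀ (ne_of_gt (hapos i)), Real.rpow_one]
  have hrm : ∀ i, r i ≤ m := by
    intro i
    have h1 : r i ≤ t ^ ((a i : ℝ))⁻¹ := by
      rw [hrdef]
      exact Real.rpow_le_rpow (le_of_lt (div_pos ht (hapos i)))
        (div_le_self ht.le (ha1 i)) (by positivity)
    have h2 : t ^ ((a i : ℝ))⁻¹ = m ^ ((A : ℝ) * ((a i : ℝ))⁻¹) := by
      rw [htdef, ← Real.rpow_natCast m A, ← Real.rpow_mul hm.le]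
    have h3 : m ^ ((A : ℝ) * ((a i : ℝ))⁻¹) ≤ m ^ (1 : ℝ) := by
      apply Real.rpow_le_rpow_of_exponent_ge hm hm1
      rw [← div_eq_mul_inv, le_div_iff₀ (hapos i), one_mul]
      exact_mod_cast hAa i
    rw [Real.rpow_one] at h3
    exact h1.trans (h2 ▸ h3)
  have hrm1 : ∀ i, r i ≤ 1 := fun i => (hrm i).trans hm1
  set z : Fin n → ℂ := fun i => ((r i : ℝ) : ℂ) with hzdef
  set G : ℝ := ∏ i, r i with hGdef
  have hG : 0 < G := Finset.prod_pos fun i _ => hr i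
  have hG1 : G ≤ 1 := Finset.prod_le_one (fun i _ => (hr i).le) fun i _ => hrm1 i
  have hfz : (∑ i, z i ^ a i) = ((t : ℝ) : ℂ) := by
    have h1 : ∀ i, z i ^ a i = ((t / a i : ℝ) : ℂ) := by
      intro i
      simp only [hzdef]
      rw [← Complex.ofReal_pow, hrpow i]
    rw [Finset.sum_congr rfl fun i _ => h1 i, ← Complex.ofReal_sum]
    congr 1
    calc ∑ i, t / (a i : ℝ) = t * ∑ i, ((a i : ℝ))⁻¹ := by
          rw [Finset.mul_sum]
          exact Finset.sum_congr rfl fun i _ => div_eq_mul_inv _ _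
    _ = t := by rw [hSR, mul_one]
  have hgz : (∏ i, z i) = ((G : ℝ) : ℂ) := by
    rw [hzdef, hGdef]
    push_cast
    rfl
  have hval : (∑ i, z i ^ a i) * (starRingEnd ℂ) (∏ i, z i) = (((t * G : ℝ)) : ℂ) := by
    rw [hfz, hgz, Complex.conj_ofReal, ← Complex.ofReal_mul]
  refine ⟨z, ?_, ?_, ?_, ?_⟩
  · rw [pi_norm_le_iff_of_nonneg hε.le]
    intro i
    simp only [hzdef]
    simp only [Complex.norm_real, Real.norm_eq_abs, abs_of_nonneg (hr i).le]
    exact (hrm i).trans hmε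
  · -- non-surjectivity
    have hq : ∀ i, (a i : ℝ) * r i ^ (a i - 1) = t / r i := by
      intro i
      have hpow : r i ^ (a i - 1) * r i = r i ^ a i := by
        rw [← pow_succ]
        congr 1
        have := ha i
        omega
      rw [eq_div_iff (ne_of_gt (hr i)), mul_assoc, hpow, hrpow i]
      rw [← mul_div_assoc]
      exact mul_div_cancel_left₀ t (ne_of_gt (hapos i))
    have hp : ∀ i, (∏ j ∈ Finset.univ.erase i, r j) = G / r i := by
      intro i
      rw [eq_div_iff (ne_of_gt (hr i)), hGdef]
      exact Finset.prod_erase_mul _ _ (mem_univ i)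
    have hL : ∀ w : Fin n → ℂ, Lmap n a z w =
        (∑ i, ((t * G / r i : ℝ) : ℂ) * w i)
        + (starRingEnd ℂ) (∑ i, ((t * G / r i : ℝ) : ℂ) * w i) := by
      intro w
      rw [Lmap_apply, hfz, hgz, Complex.conj_ofReal]
      have e1 : ∀ i, (∏ j ∈ Finset.univ.erase i, z j) = ((G / r i : ℝ) : ℂ) := by
        intro i
        simp only [hzdef]
        rw [show (∏ j ∈ Finset.univ.erase i, ((r j : ℝ) : ℂ))
            = ((∏ j ∈ Finset.univ.erase i, r j : ℝ) : ℂ) from by push_cast; rfl, hp i]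
      have e2 : ∀ i, (a i : ℂ) * z i ^ (a i - 1) = ((t / r i : ℝ) : ℂ) := by
        intro i
        simp only [hzdef]
        rw [show ((r i : ℝ) : ℂ) ^ (a i - 1) = ((r i ^ (a i - 1) : ℝ) : ℂ) from by push_cast; rfl]
        rw [← hq i]
        push_cast
        ring
      simp only [e1, e2]
      have c1 : ((G:ℝ):ℂ) * (∑ i, ((t / r i : ℝ):ℂ) * w i)
          = ∑ i, ((t * G / r i : ℝ) : ℂ) * w i := by
        rw [Finset.mul_sum]
        exact Finset.sum_congr rfl fun i _ => by push_cast; ring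
      have c2 : ((t:ℝ):ℂ) * (starRingEnd ℂ) (∑ i, ((G / r i : ℝ):ℂ) * w i)
          = (starRingEnd ℂ) (∑ i, ((t * G / r i : ℝ) : ℂ) * w i) := by
        rw [← Complex.conj_ofReal t, ← map_mul, Finset.mul_sum]
        congr 1
        exact Finset.sum_congr rfl fun i _ => by push_cast; ring
      rw [c1, c2]
      exact add_comm _ _
    intro hs
    obtain ⟨w, hw⟩ := hs Complex.I
    have him : (Lmap n a z w).im = 0 := by
      rw [hL w]
      simp [Complex.add_im, Complex.conj_im]
    rw [hw] at him
    simp [Complex.I_im] at him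
  · rw [hval]
    simp only [Complex.norm_real, Real.norm_eq_abs]
    rw [abs_of_nonneg (by positivity)]
    calc t * G ≤ t * 1 := by nlinarith
    _ = t := mul_one t
    _ ≤ δ := htm.trans hmδ
  · rw [hval]
    simp only [ne_eq, Complex.ofReal_eq_zero]
    positivity


/-- For `a i ≥ 2`, the mixed function
`h z = (∑ i, (z i)^(a i)) · conj (∏ i, z i)` has an isolated critical value
at `0 ∈ ℂ` — i.e. there are `ε > 0` and `δ > 0` such that every critical
point `z` of `h` (a point where the real Fréchet derivative of `h` is not
surjective) with `‖z‖ ≤ ε` and `‖h z‖ ≤ δ` satisfies `h z = 0` — if and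
only if `∑ i, 1 / (a i) ≠ 1`. -/
theorem fgbar_isolated_critical_value_iff
    (n : ℕ) (hn : 2 ≤ n) (a : Fin n → ℕ) (ha : ∀ i, 2 ≤ a i)
    (h : (Fin n → ℂ) → ℂ)
    (hh : ∀ z, h z = (∑ i, z i ^ a i) * (starRingEnd ℂ) (∏ i, z i)) :
    (∃ ε > (0 : ℝ), ∃ δ > (0 : ℝ), ∀ z : Fin n → ℂ, ‖z‖ ≤ ε →
        ¬ Function.Surjective (fderiv ℝ h z) → ‖h z‖ ≤ δ → h z = 0) ↔
      (∑ i, (1 : ℚ) / (a i : ℚ)) ≠ 1 := by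
  have hfun : h = fun z => (∑ i, z i ^ a i) * (starRingEnd ℂ) (∏ i, z i) := funext hh
  subst hfun
  constructor
  · intro hiso hsum
    obtain ⟨ε, hε, δ, hδ, H⟩ := hiso
    obtain ⟨z, h1, h2, h3, h4⟩ := exists_crit n hn a ha hsum ε δ hε hδ
    have hfd := (hasF n a z).fderiv
    exact h4 (H z h1 (by rw [hfd]; exact h2) h3)
  · intro hsum
    refine ⟨1, one_pos, 1, one_pos, fun z _ hns hle => ?_⟩
    by_contra hz0
    exact hsum (no_crit n hn a ha z (by rwa [(hasF n a z).fderiv] at hns) hz0)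
end
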